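/- arXiv:2010.15564 — 3 statements merged into one kernel-verified Lean document; each statement's English description precedes it below -/
import Mathlib

section
/- Let P ∈ ℝ^{n×r}, Q ∈ ℝ^{ℓ×n}, R ∈ ℝ^{ℓ×r} satisfy im R ⊆ im Q and ker P ⊆ ker R (so that 𝒜 := { A ∈ ℝ^{n×n} : R = Q A P } is nonempty), and let B ∈ ℝ^{n×m}, C ∈ ℝ^{p×n}, D ∈ ℝ^{p×m}. Then: (i) rank [[A − λI, B],[C, D]] = n + rank [[B],[D]] for all A ∈ 𝒜 and all λ ∈ ℂ if and only if C⁻¹(im D) ⊆ im P and rank [[R − λQP, QB],[CP, D]] = rank P + rank [[QB],[D]] for all λ ∈ ℂ. (ii) rank [[A − λI, B],[C, D]] = n + rank [[B],[D]] for all A ∈ 𝒜 and all λ ∈ ℂ with |λ| ≥ 1 if and only if C⁻¹(im D) ⊆ im P and rank [[R − λQP, QB],[CP, D]] = rank P + rank [[QB],[D]] for all λ ∈ ℂ with |λ| ≥ 1. -/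
/-!
Both rank conditions are kernel conditions. Comparing kernels with those of the block diagonal
matrices `diag(I, [B; D])` and `diag(P, [QB; D])`, the first says that every kernel vector `(x, u)`
of `[[A - λI, B], [C, D]]` has `x = 0`, the second (using `ker P ⊆ ker R`) that every kernel vector
`(w, u)` of `[[R - λQP, QB], [CP, D]]` has `Pw = 0`.

If `C⁻¹(im D) ⊆ im P`, a kernel vector `(x, u)` of the first pencil has `x = Pw`, and multiplying
its first block row by `Q` makes `(w, u)` a kernel vector of the second, so `x = 0`.

Conversely, write `R = QA₀P`; then `A₀ + Δ ∈ 𝒜` whenever `ΔP = 0` or `QΔ = 0`. Perturbations of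
the first kind prescribe `Ax` freely at a real `x ∉ im P`, which gives `C⁻¹(im D) ⊆ im P` at
`λ = 1`. Those of the second kind prescribe `A` on real independent vectors, as long as the new
values agree with those of `A₀` modulo `ker Q`. For a kernel vector `(w, u)` of the reduced pencil,
`x = Pw` and `Ax = λx - Bu` satisfy this, so such an `A` exists when `Re x` and `Im x` are
independent; otherwise a complex multiple of `x` is real, and the imaginary parts of the equations
let one replace `λ` by a real `μ ∈ S` (`λ` itself or `1`).
-/

open Matrix

/-- Complexification of a real matrix. -/
noncomputable def cx {a b : ℕ} (M : Matrix (Fin a) (Fin b) ℝ) : Matrix (Fin a) (Fin b) ℂ :=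
  M.map (algebraMap ℝ ℂ)

theorem Sum.elim_eq_zero_iff {α β γ : Type*} [Zero γ] {a : α → γ} {b : β → γ} :
    Sum.elim a b = 0 ↔ a = 0 ∧ b = 0 := by
  rw [← Sum.elim_zero_zero, Sum.elim_eq_iff]

section Field

variable {K : Type*} [Field K]

theorem Submodule.finrank_prod {V W : Type*} [AddCommGroup V] [Module K V] [AddCommGroup W]
    [Module K W] (p : Submodule K V) (q : Submodule K W) [FiniteDimensional K p]
    [FiniteDimensional K q] :
    Module.finrank K (p.prod q) = Module.finrank K p + Module.finrank K q := by
  rw [← Module.finrank_prod, ← LinearMap.finrank_range_of_inj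
    (f := p.subtype.prodMap q.subtype) (p.injective_subtype.prodMap q.injective_subtype),
    LinearMap.range_prodMap, Submodule.range_subtype, Submodule.range_subtype]

theorem LinearIndependent.exists_linearMap_apply_eq {ι V V' : Type*} [AddCommGroup V]
    [Module K V] [AddCommGroup V'] [Module K V'] {x : ι → V} (hx : LinearIndependent K x)
    (y : ι → V') : ∃ g : V →ₗ[K] V', ∀ i, g (x i) = y i := by
  obtain ⟨g, hg⟩ := LinearMap.exists_extend (Finsupp.linearCombination K y ∘ₗ hx.repr)
  refine ⟨g, fun i => ?_⟩
  have := LinearMap.congr_fun hg ⟨x i, Submodule.subset_span (Set.mem_range_self i)⟩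
  simpa [hx.repr_eq_single i ⟨x i, _⟩ rfl] using this

namespace Matrix

variable {ι κ σ τ ρ : Type*} [Fintype κ] [Fintype τ]

theorem rank_fromBlocks_zero_zero (M : Matrix ι κ K) (N : Matrix σ τ K) :
    (fromBlocks M 0 0 N).rank = M.rank + N.rank := by
  let eD := LinearEquiv.sumArrowLequivProdArrow κ τ K K
  let eR := LinearEquiv.sumArrowLequivProdArrow ι σ K K
  have h : (fromBlocks M 0 0 N).mulVecLin =
      eR.symm.toLinearMap ∘ₗ (M.mulVecLin.prodMap N.mulVecLin) ∘ₗ eD.toLinearMap := by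
    ext v i
    cases i <;>
      simp only [eD, eR, mulVecBilin_apply, fromBlocks_mulVec, zero_mulVec, add_zero, zero_add,
        Sum.elim_inl, Sum.elim_inr, LinearMap.coe_comp, LinearEquiv.coe_coe, Function.comp_apply,
        LinearMap.prodMap_apply, LinearEquiv.sumArrowLequivProdArrow_symm_apply_inl,
        LinearEquiv.sumArrowLequivProdArrow_symm_apply_inr] <;>
      rfl
  rw [rank, h, LinearMap.range_comp, LinearMap.range_comp, LinearEquiv.range, Submodule.map_top,
    LinearEquiv.finrank_map_eq, LinearMap.range_prodMap, Submodule.finrank_prod]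
  rfl

theorem rank_eq_rank_iff_ker_le {M : Matrix ι κ K} {N : Matrix σ κ K}
    (h : LinearMap.ker N.mulVecLin ≤ LinearMap.ker M.mulVecLin) :
    M.rank = N.rank ↔ LinearMap.ker M.mulVecLin ≤ LinearMap.ker N.mulVecLin := by
  have hM := LinearMap.finrank_range_add_finrank_ker M.mulVecLin
  have hN := LinearMap.finrank_range_add_finrank_ker N.mulVecLin
  refine ⟨fun hr => (Submodule.eq_of_le_of_finrank_eq h ?_).ge, fun h' => ?_⟩
  · rw [rank, rank] at hr; omega
  · rw [le_antisymm h' h] at hM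
    rw [rank, rank]; omega

theorem rank_fromBlocks_eq_iff (P : Matrix ι κ K) (X : Matrix σ κ K) (B : Matrix σ τ K)
    (C : Matrix ρ κ K) (D : Matrix ρ τ K) (hX : ∀ w, P *ᵥ w = 0 → X *ᵥ w = 0)
    (hC : ∀ w, P *ᵥ w = 0 → C *ᵥ w = 0) :
    (fromBlocks X B C D).rank = P.rank + (fromRows B D).rank ↔
      ∀ w u, X *ᵥ w + B *ᵥ u = 0 → C *ᵥ w + D *ᵥ u = 0 → P *ᵥ w = 0 := by
  have hS : LinearMap.ker (fromBlocks P 0 0 (fromRows B D)).mulVecLin ≤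
      LinearMap.ker (fromBlocks X B C D).mulVecLin := by
    intro v hv
    simp only [LinearMap.mem_ker, mulVecLin_apply, fromBlocks_mulVec, fromRows_mulVec,
      zero_mulVec, add_zero, zero_add, Sum.elim_eq_zero_iff] at hv ⊢
    rw [hX _ hv.1, hC _ hv.1, hv.2.1, hv.2.2, add_zero, add_zero]
    exact ⟨rfl, rfl⟩
  rw [← rank_fromBlocks_zero_zero, rank_eq_rank_iff_ker_le hS]
  constructor
  · intro h w u hXB hCD
    have hwu : Sum.elim w u ∈ LinearMap.ker (fromBlocks X B C D).mulVecLin := by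
      simp [fromBlocks_mulVec, hXB, hCD]
    have := h hwu
    simp only [LinearMap.mem_ker, mulVecLin_apply, fromBlocks_mulVec, fromRows_mulVec,
      zero_mulVec, add_zero, zero_add, Sum.elim_eq_zero_iff, Sum.elim_comp_inl] at this
    exact this.1
  · intro h v hv
    simp only [LinearMap.mem_ker, mulVecLin_apply, fromBlocks_mulVec, fromRows_mulVec,
      zero_mulVec, add_zero, zero_add, Sum.elim_eq_zero_iff] at hv ⊢
    have hP := h _ _ hv.1 hv.2
    rw [hX _ hP, hC _ hP, zero_add, zero_add] at hv
    exact ⟨hP, hv⟩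

variable {l m n r : Type*} [Fintype l] [Fintype m] [Fintype n] [Fintype r]

theorem exists_mul_mul_self_eq_self (M : Matrix m n K) : ∃ G : Matrix n m K, M * G * M = M := by
  classical
  obtain ⟨s, hs⟩ := M.mulVecLin.rangeRestrict.exists_rightInverse_of_surjective
    (LinearMap.range_rangeRestrict _)
  obtain ⟨t, ht⟩ := (LinearMap.range M.mulVecLin).subtype.exists_leftInverse_of_injective
    (Submodule.ker_subtype _)
  refine ⟨LinearMap.toMatrix' (s ∘ₗ t), ext_iff_mulVec.2 fun v => ?_⟩
  have hst : t (M *ᵥ v) = M.mulVecLin.rangeRestrict v :=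
    LinearMap.congr_fun ht (M.mulVecLin.rangeRestrict v)
  have hs' : M *ᵥ s (t (M *ᵥ v)) = t (M *ᵥ v) :=
    congrArg Subtype.val (LinearMap.congr_fun hs (t (M *ᵥ v)))
  rw [← mulVec_mulVec, ← mulVec_mulVec, LinearMap.toMatrix'_mulVec, LinearMap.comp_apply, hs',
    hst]
  rfl

theorem exists_eq_mul_mul_of_range_le_of_ker_le {P : Matrix n r K} {Q : Matrix l n K}
    {R : Matrix l r K} (him : LinearMap.range R.mulVecLin ≤ LinearMap.range Q.mulVecLin)
    (hker : LinearMap.ker P.mulVecLin ≤ LinearMap.ker R.mulVecLin) :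
    ∃ A : Matrix n n K, R = Q * A * P := by
  obtain ⟨G, hG⟩ := P.exists_mul_mul_self_eq_self
  obtain ⟨H, hH⟩ := Q.exists_mul_mul_self_eq_self
  have hRGP : R * G * P = R := ext_iff_mulVec.2 fun v => by
    have hv : G *ᵥ (P *ᵥ v) - v ∈ LinearMap.ker P.mulVecLin := by
      simp [mulVec_sub, mulVec_mulVec, ← Matrix.mul_assoc, hG]
    have := hker hv
    simp only [LinearMap.mem_ker, mulVecLin_apply, mulVec_sub, sub_eq_zero] at this
    simpa [mulVec_mulVec, Matrix.mul_assoc] using this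
  have hQHR : Q * H * R = R := ext_iff_mulVec.2 fun v => by
    obtain ⟨y, hy⟩ := him (LinearMap.mem_range_self _ v)
    simp only [mulVecLin_apply] at hy
    rw [← mulVec_mulVec, ← hy, mulVec_mulVec, hH]
  refine ⟨H * R * G, ?_⟩
  calc R = Q * H * R * G * P := by rw [hQHR, hRGP]
    _ = Q * (H * R * G) * P := by simp only [Matrix.mul_assoc]

theorem rank_map_of_square {L : Type*} [Field L] (f : K →+* L)
    (M : Matrix n n K) : (M.map f).rank = M.rank := by
  classical
  obtain ⟨V, U, e, hV, hU, hVMU⟩ := M.exists_rank_normal_form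
  rw [← diagonal_one, ← diagonal_zero, fromBlocks_diagonal, submatrix_diagonal_equiv] at hVMU
  obtain ⟨d, hd⟩ : ∃ d, V * M * U = diagonal d := ⟨_, hVMU⟩
  have hV' : IsUnit V.det := (isUnit_iff_isUnit_det _).1 hV
  have hU' : IsUnit U.det := (isUnit_iff_isUnit_det _).1 hU
  have hfV : IsUnit (V.map f).det := (isUnit_iff_isUnit_det _).1 (hV.map f.mapMatrix)
  have hfU : IsUnit (U.map f).det := (isUnit_iff_isUnit_det _).1 (hU.map f.mapMatrix)
  calc (M.map f).rank = (V.map f * M.map f * U.map f).rank := by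
        rw [rank_mul_eq_left_of_isUnit_det _ _ hfU, rank_mul_eq_right_of_isUnit_det _ _ hfV]
    _ = (V * M * U).rank := by
        rw [← Matrix.map_mul, ← Matrix.map_mul, hd, diagonal_map (map_zero f), rank_diagonal,
          rank_diagonal]
        exact Fintype.card_congr (Equiv.subtypeEquivRight fun i => map_ne_zero f)
    _ = M.rank := by
        rw [rank_mul_eq_left_of_isUnit_det _ _ hU', rank_mul_eq_right_of_isUnit_det _ _ hV']

end Matrix

section StateKernel

variable {ν μ π : Type*} [Fintype ν] [Fintype μ]

def StateKernelTrivial (A : Matrix ν ν K) (B : Matrix ν μ K) (C : Matrix π ν K)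
    (D : Matrix π μ K) (lam : K) : Prop :=
  ∀ x u, A *ᵥ x + B *ᵥ u = lam • x → C *ᵥ x + D *ᵥ u = 0 → x = 0

theorem rank_fromBlocks_sub_smul_one_eq_iff [DecidableEq ν] (A : Matrix ν ν K)
    (B : Matrix ν μ K) (C : Matrix π ν K) (D : Matrix π μ K) (lam : K) :
    (fromBlocks (A - lam • 1) B C D).rank = Fintype.card ν + (fromRows B D).rank ↔
      StateKernelTrivial A B C D lam := by
  rw [← rank_one (n := ν) (R := K), rank_fromBlocks_eq_iff 1 _ B C D (by simp) (by simp)]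
  simp only [one_mulVec, sub_mulVec, smul_mulVec, sub_add_eq_add_sub, sub_eq_zero]
  rfl

end StateKernel

section AffineSet

variable {l n r : Type*} [Fintype n] {P : Matrix n r K} {Q : Matrix l n K} {R : Matrix l r K}
  {A₀ : Matrix n n K}

theorem exists_eq_mul_mul_and_mulVec_eq_of_notMem_range [Fintype r] (hA₀ : R = Q * A₀ * P)
    {x : n → K} (hx : x ∉ LinearMap.range P.mulVecLin) (y : n → K) :
    ∃ A : Matrix n n K, R = Q * A * P ∧ A *ᵥ x = y := by
  classical
  obtain ⟨g, hg, hgx⟩ := LinearMap.exists_extend_of_notMem 0 hx (y - A₀ *ᵥ x)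
  set Δ := LinearMap.toMatrix' g
  have hΔP : Δ * P = 0 := ext_iff_mulVec.2 fun v => by
    rw [← mulVec_mulVec, LinearMap.toMatrix'_mulVec, zero_mulVec]
    exact LinearMap.congr_fun hg ⟨_, LinearMap.mem_range_self _ v⟩
  refine ⟨A₀ + Δ, ?_, ?_⟩
  · rw [Matrix.mul_add, Matrix.add_mul, Matrix.mul_assoc Q Δ, hΔP, Matrix.mul_zero, add_zero,
      hA₀]
  · rw [add_mulVec, LinearMap.toMatrix'_mulVec, hgx, add_sub_cancel]

theorem exists_eq_mul_mul_and_mulVec_eq_of_linearIndependent (hA₀ : R = Q * A₀ * P)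
    {ι : Type*} {x y : ι → n → K} (hx : LinearIndependent K x)
    (hy : ∀ i, Q *ᵥ (y i - A₀ *ᵥ x i) = 0) :
    ∃ A : Matrix n n K, R = Q * A * P ∧ ∀ i, A *ᵥ x i = y i := by
  classical
  obtain ⟨g, hg⟩ := hx.exists_linearMap_apply_eq
    (V' := LinearMap.ker Q.mulVecLin) fun i => ⟨y i - A₀ *ᵥ x i, hy i⟩
  set Δ := LinearMap.toMatrix' ((LinearMap.ker Q.mulVecLin).subtype ∘ₗ g)
  have hQΔ : Q * Δ = 0 := ext_iff_mulVec.2 fun v => by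
    rw [← mulVec_mulVec, LinearMap.toMatrix'_mulVec, zero_mulVec]
    exact (g v).2
  refine ⟨A₀ + Δ, ?_, fun i => ?_⟩
  · rw [Matrix.mul_add, Matrix.add_mul, hQΔ, Matrix.zero_mul, add_zero, hA₀]
  · rw [add_mulVec, LinearMap.toMatrix'_mulVec, LinearMap.comp_apply, hg,
      Submodule.subtype_apply, add_sub_cancel]

end AffineSet

end Field

section Complexification

variable {ι : Type*}

def reVec : (ι → ℂ) →ₗ[ℝ] ι → ℝ := Complex.reLm.compLeft ι

def imVec : (ι → ℂ) →ₗ[ℝ] ι → ℝ := Complex.imLm.compLeft ι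

noncomputable def ofRealVec : (ι → ℝ) →ₗ[ℝ] ι → ℂ := (Algebra.linearMap ℝ ℂ).compLeft ι

@[simp] theorem reVec_apply (z : ι → ℂ) (i : ι) : reVec z i = (z i).re := rfl

@[simp] theorem imVec_apply (z : ι → ℂ) (i : ι) : imVec z i = (z i).im := rfl

@[simp] theorem ofRealVec_apply (v : ι → ℝ) (i : ι) : ofRealVec v i = v i := rfl

theorem vec_ext_iff {z w : ι → ℂ} : z = w ↔ reVec z = reVec w ∧ imVec z = imVec w := by
  simp [funext_iff, Complex.ext_iff, forall_and]

@[simp] theorem reVec_smul (c : ℂ) (z : ι → ℂ) :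
    reVec (c • z) = c.re • reVec z - c.im • imVec z := by
  ext; simp

@[simp] theorem imVec_smul (c : ℂ) (z : ι → ℂ) :
    imVec (c • z) = c.im • reVec z + c.re • imVec z := by
  ext; simp [add_comm]

@[simp] theorem reVec_ofRealVec (v : ι → ℝ) : reVec (ofRealVec v) = v := rfl

@[simp] theorem imVec_ofRealVec (v : ι → ℝ) : imVec (ofRealVec v) = 0 := by ext; simp

theorem ofRealVec_eq_zero {v : ι → ℝ} : ofRealVec v = 0 ↔ v = 0 := by
  simp [vec_ext_iff]

open scoped ComplexOrder in
theorem Matrix.rank_map_algebraMap {m n : Type*} [Fintype m] [Fintype n] (M : Matrix m n ℝ) :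
    (M.map (algebraMap ℝ ℂ)).rank = M.rank := by
  have hstar : Function.Semiconj (algebraMap ℝ ℂ) star star :=
    fun r => (Complex.conj_ofReal r).symm
  rw [← rank_conjTranspose_mul_self, ← conjTranspose_map _ hstar, ← Matrix.map_mul,
    conjTranspose_eq_transpose_of_trivial, rank_map_of_square, rank_transpose_mul_self]

variable {a b : ℕ}

@[simp] theorem reVec_cx_mulVec (M : Matrix (Fin a) (Fin b) ℝ) (z : Fin b → ℂ) :
    reVec (cx M *ᵥ z) = M *ᵥ reVec z := by
  ext i; simp [cx, mulVec, dotProduct, Complex.re_sum]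

@[simp] theorem imVec_cx_mulVec (M : Matrix (Fin a) (Fin b) ℝ) (z : Fin b → ℂ) :
    imVec (cx M *ᵥ z) = M *ᵥ imVec z := by
  ext i; simp [cx, mulVec, dotProduct, Complex.im_sum]

theorem cx_mulVec_eq_zero_iff (M : Matrix (Fin a) (Fin b) ℝ) (z : Fin b → ℂ) :
    cx M *ᵥ z = 0 ↔ M *ᵥ reVec z = 0 ∧ M *ᵥ imVec z = 0 := by
  simp [vec_ext_iff]

theorem cx_mul (M : Matrix (Fin a) (Fin b) ℝ) {c : ℕ} (N : Matrix (Fin b) (Fin c) ℝ) :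
    cx (M * N) = cx M * cx N :=
  Matrix.map_mul

end Complexification

variable {n r l m p : ℕ} {P : Matrix (Fin n) (Fin r) ℝ} {Q : Matrix (Fin l) (Fin n) ℝ}
  {R : Matrix (Fin l) (Fin r) ℝ} {B : Matrix (Fin n) (Fin m) ℝ} {C : Matrix (Fin p) (Fin n) ℝ}
  {D : Matrix (Fin p) (Fin m) ℝ} {A₀ : Matrix (Fin n) (Fin n) ℝ} {S : Set ℂ}

theorem cx_mulVec_eq_zero_of_ker_le (hker : LinearMap.ker P.mulVecLin ≤ LinearMap.ker R.mulVecLin)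
    {w : Fin r → ℂ} (hw : cx P *ᵥ w = 0) : cx R *ᵥ w = 0 := by
  rw [cx_mulVec_eq_zero_iff] at hw ⊢
  exact ⟨hker hw.1, hker hw.2⟩

theorem exists_cx_mulVec_eq_of_comap_le
    (h : (LinearMap.range D.mulVecLin).comap C.mulVecLin ≤ LinearMap.range P.mulVecLin)
    {x : Fin n → ℂ} {u : Fin m → ℂ} (hxu : cx C *ᵥ x + cx D *ᵥ u = 0) :
    ∃ w, cx P *ᵥ w = x := by
  obtain ⟨hre, him⟩ := vec_ext_iff.1 hxu
  simp only [map_add, map_zero, reVec_cx_mulVec, imVec_cx_mulVec, ← eq_neg_iff_add_eq_zero,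
    ← mulVec_neg] at hre him
  obtain ⟨w₁, hw₁⟩ := h (x := reVec x) ⟨_, hre.symm⟩
  obtain ⟨w₂, hw₂⟩ := h (x := imVec x) ⟨_, him.symm⟩
  refine ⟨fun j => ⟨w₁ j, w₂ j⟩, vec_ext_iff.2 ⟨?_, ?_⟩⟩
  · rw [reVec_cx_mulVec]; exact hw₁
  · rw [imVec_cx_mulVec]; exact hw₂

theorem rank_fromBlocks_cx_eq_iff (A : Matrix (Fin n) (Fin n) ℝ) (lam : ℂ) :
    (fromBlocks (cx A - lam • 1) (cx B) (cx C) (cx D)).rank = n + (fromRows B D).rank ↔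
      StateKernelTrivial (cx A) (cx B) (cx C) (cx D) lam := by
  rw [← rank_map_algebraMap, fromRows_map]
  have h := rank_fromBlocks_sub_smul_one_eq_iff (cx A) (cx B) (cx C) (cx D) lam
  rwa [Fintype.card_fin] at h

theorem rank_fromBlocks_cx_reduced_eq_iff
    (hker : LinearMap.ker P.mulVecLin ≤ LinearMap.ker R.mulVecLin) (lam : ℂ) :
    (fromBlocks (cx R - lam • (cx Q * cx P)) (cx Q * cx B) (cx C * cx P) (cx D)).rank
        = P.rank + (fromRows (Q * B) D).rank ↔
      ∀ w u, (cx R - lam • (cx Q * cx P)) *ᵥ w + (cx Q * cx B) *ᵥ u = 0 →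
        (cx C * cx P) *ᵥ w + cx D *ᵥ u = 0 → cx P *ᵥ w = 0 := by
  rw [← rank_map_algebraMap P, ← rank_map_algebraMap, fromRows_map, Matrix.map_mul]
  refine rank_fromBlocks_eq_iff (cx P) _ (cx Q * cx B) (cx C * cx P) (cx D) (fun w hw => ?_)
    (fun w hw => ?_)
  · rw [sub_mulVec, smul_mulVec, ← mulVec_mulVec, hw, cx_mulVec_eq_zero_of_ker_le hker hw,
      mulVec_zero, smul_zero, sub_zero]
  · rw [← mulVec_mulVec, hw, mulVec_zero]

theorem StateKernelTrivial.eq_zero_of_real {A : Matrix (Fin n) (Fin n) ℝ} {μ : ℝ}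
    (h : StateKernelTrivial (cx A) (cx B) (cx C) (cx D) μ) {v : Fin n → ℝ} {u : Fin m → ℝ}
    (h₁ : A *ᵥ v + B *ᵥ u = μ • v) (h₂ : C *ᵥ v + D *ᵥ u = 0) : v = 0 :=
  ofRealVec_eq_zero.1 <| h _ (ofRealVec u) (by simp [vec_ext_iff, h₁]) (by simp [vec_ext_iff, h₂])

theorem stateKernelTrivial_of_reduced {A : Matrix (Fin n) (Fin n) ℝ} (hA : R = Q * A * P)
    (hcomap : (LinearMap.range D.mulVecLin).comap C.mulVecLin ≤ LinearMap.range P.mulVecLin)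
    {lam : ℂ} (hred : ∀ w u, (cx R - lam • (cx Q * cx P)) *ᵥ w + (cx Q * cx B) *ᵥ u = 0 →
        (cx C * cx P) *ᵥ w + cx D *ᵥ u = 0 → cx P *ᵥ w = 0) :
    StateKernelTrivial (cx A) (cx B) (cx C) (cx D) lam := by
  intro x u h₁ h₂
  obtain ⟨w, rfl⟩ := exists_cx_mulVec_eq_of_comap_le hcomap h₂
  refine hred w u ?_ (by rwa [← mulVec_mulVec])
  rw [hA, cx_mul, cx_mul]
  calc (cx Q * cx A * cx P - lam • (cx Q * cx P)) *ᵥ w + (cx Q * cx B) *ᵥ u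
      = cx Q *ᵥ (cx A *ᵥ (cx P *ᵥ w) + cx B *ᵥ u - lam • (cx P *ᵥ w)) := by
        simp only [mulVec_sub, mulVec_add, sub_mulVec, mulVec_smul, smul_mulVec, mulVec_mulVec,
          Matrix.mul_assoc]
        abel
    _ = 0 := by rw [h₁, sub_self, mulVec_zero]

def StateKernelTrivialOn (P : Matrix (Fin n) (Fin r) ℝ) (Q : Matrix (Fin l) (Fin n) ℝ)
    (R : Matrix (Fin l) (Fin r) ℝ) (B : Matrix (Fin n) (Fin m) ℝ) (C : Matrix (Fin p) (Fin n) ℝ)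
    (D : Matrix (Fin p) (Fin m) ℝ) (S : Set ℂ) : Prop :=
  ∀ A, R = Q * A * P → ∀ lam ∈ S, StateKernelTrivial (cx A) (cx B) (cx C) (cx D) lam

namespace StateKernelTrivialOn

theorem comap_range_le_range (h : StateKernelTrivialOn P Q R B C D S) (hS : 1 ∈ S)
    (hA₀ : R = Q * A₀ * P) :
    (LinearMap.range D.mulVecLin).comap C.mulVecLin ≤ LinearMap.range P.mulVecLin := by
  rintro x ⟨u, hu⟩
  by_contra hx
  obtain ⟨A, hA, hAx⟩ := exists_eq_mul_mul_and_mulVec_eq_of_notMem_range hA₀ hx (x + B *ᵥ u)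
  have hx0 : x = 0 := StateKernelTrivial.eq_zero_of_real (μ := 1) (u := -u)
    (by simpa using h A hA 1 hS) (by rw [hAx, mulVec_neg]; simp)
    (by rw [mulVec_neg, ← sub_eq_add_neg, sub_eq_zero]; exact hu.symm)
  exact hx (hx0 ▸ Submodule.zero_mem _)

theorem eq_zero_of_ofRealVec (h : StateKernelTrivialOn P Q R B C D S) (hS : 1 ∈ S)
    (hA₀ : R = Q * A₀ * P) {lam : ℂ} (hlam : lam ∈ S) {v : Fin n → ℝ} {u : Fin m → ℂ}
    (e₁ : cx Q *ᵥ (lam • ofRealVec v - cx B *ᵥ u - cx A₀ *ᵥ ofRealVec v) = 0)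
    (e₂ : cx C *ᵥ ofRealVec v + cx D *ᵥ u = 0) : v = 0 := by
  by_contra hv
  obtain ⟨e₁re, e₁im⟩ := (cx_mulVec_eq_zero_iff _ _).1 e₁
  obtain ⟨e₂re, e₂im⟩ := vec_ext_iff.1 e₂
  simp only [map_sub, map_add, map_zero, reVec_smul, imVec_smul, reVec_ofRealVec,
    imVec_ofRealVec, reVec_cx_mulVec, imVec_cx_mulVec, mulVec_zero, smul_zero, sub_zero,
    add_zero, zero_add] at e₁re e₁im e₂re e₂im
  -- A real `A` can only realise a real eigenvalue on the real vector `v`; the imaginary parts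
  -- `e₁im`, `e₂im` let us move `lam` to a real `μ ∈ S` at the cost of replacing `Re u` by `u'`.
  obtain ⟨μ, t, hμ, hμt⟩ : ∃ μ t : ℝ, (μ : ℂ) ∈ S ∧ μ = lam.re + t * lam.im := by
    by_cases hb : lam.im = 0
    · exact ⟨lam.re, 0, by rwa [show (lam.re : ℂ) = lam from Complex.ext rfl hb.symm], by simp⟩
    · exact ⟨1, (1 - lam.re) / lam.im, by simpa using hS, by field_simp; ring⟩
  set u' := reVec u + t • imVec u
  obtain ⟨A, hA, hAv⟩ := exists_eq_mul_mul_and_mulVec_eq_of_linearIndependent hA₀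
    (x := fun _ : Unit => v) (y := fun _ => μ • v - B *ᵥ u')
    (linearIndependent_unique_iff.2 hv) fun _ => by
      rw [hμt]
      linear_combination (norm := skip) e₁re + t • e₁im
      simp only [u', mulVec_add, mulVec_sub, mulVec_smul, add_smul, smul_sub, smul_smul]
      module
  refine hv ((h A hA μ hμ).eq_zero_of_real (u := u') ?_ ?_)
  · rw [hAv (), sub_add_cancel]
  · rw [mulVec_add, mulVec_smul, e₂im, smul_zero, add_zero, e₂re]

theorem eq_zero (h : StateKernelTrivialOn P Q R B C D S) (hS : 1 ∈ S) (hA₀ : R = Q * A₀ * P)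
    {lam : ℂ} (hlam : lam ∈ S) {x : Fin n → ℂ} {u : Fin m → ℂ}
    (e₁ : cx Q *ᵥ (lam • x - cx B *ᵥ u - cx A₀ *ᵥ x) = 0) (e₂ : cx C *ᵥ x + cx D *ᵥ u = 0) :
    x = 0 := by
  by_cases hind : LinearIndependent ℝ ![reVec x, imVec x]
  · set y := lam • x - cx B *ᵥ u
    obtain ⟨e₁re, e₁im⟩ := (cx_mulVec_eq_zero_iff _ _).1 e₁
    simp only [map_sub, reVec_cx_mulVec, imVec_cx_mulVec] at e₁re e₁im
    obtain ⟨A, hA, hAx⟩ := exists_eq_mul_mul_and_mulVec_eq_of_linearIndependent hA₀ hind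
      (y := ![reVec y, imVec y]) (by simpa [Fin.forall_fin_two] using ⟨e₁re, e₁im⟩)
    have hAy : cx A *ᵥ x = y := vec_ext_iff.2 ⟨by simpa using hAx 0, by simpa using hAx 1⟩
    exact h A hA lam hlam x u (by rw [hAy, sub_add_cancel]) e₂
  · obtain ⟨s, t, hst, hne⟩ : ∃ s t : ℝ, s • reVec x + t • imVec x = 0 ∧ ¬(s = 0 ∧ t = 0) := by
      simpa [LinearIndependent.pair_iff] using hind
    -- `(t + s i) • x` is real because `s • Re x + t • Im x = 0`.
    set c : ℂ := ⟨t, s⟩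
    have hc : c ≠ 0 := fun hc => hne ⟨congrArg Complex.im hc, congrArg Complex.re hc⟩
    have hcx : c • x = ofRealVec (t • reVec x - s • imVec x) := by
      refine vec_ext_iff.2 ⟨by simp [c], ?_⟩
      simpa [c] using hst
    have hv := h.eq_zero_of_ofRealVec hS hA₀ hlam (u := c • u)
      (by rw [← hcx, mulVec_smul, mulVec_smul, smul_comm lam c, ← smul_sub, ← smul_sub,
        mulVec_smul, e₁, smul_zero])
      (by rw [← hcx, mulVec_smul, mulVec_smul, ← smul_add, e₂, smul_zero])
    rw [hv, map_zero] at hcx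
    exact (smul_eq_zero.1 hcx).resolve_left hc

theorem cx_mulVec_eq_zero (h : StateKernelTrivialOn P Q R B C D S) (hS : 1 ∈ S)
    (hA₀ : R = Q * A₀ * P) {lam : ℂ} (hlam : lam ∈ S) {w : Fin r → ℂ} {u : Fin m → ℂ}
    (e₁ : (cx R - lam • (cx Q * cx P)) *ᵥ w + (cx Q * cx B) *ᵥ u = 0)
    (e₂ : (cx C * cx P) *ᵥ w + cx D *ᵥ u = 0) : cx P *ᵥ w = 0 := by
  refine h.eq_zero hS hA₀ hlam (u := u) ?_ (by rwa [mulVec_mulVec])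
  rw [hA₀, cx_mul, cx_mul] at e₁
  calc cx Q *ᵥ (lam • (cx P *ᵥ w) - cx B *ᵥ u - cx A₀ *ᵥ (cx P *ᵥ w))
      = -((cx Q * cx A₀ * cx P - lam • (cx Q * cx P)) *ᵥ w + (cx Q * cx B) *ᵥ u) := by
        simp only [mulVec_sub, sub_mulVec, mulVec_smul, smul_mulVec, mulVec_mulVec,
          Matrix.mul_assoc]
        abel
    _ = 0 := by rw [e₁, neg_zero]

end StateKernelTrivialOn

theorem stateKernelTrivialOn_iff
    (him : LinearMap.range R.mulVecLin ≤ LinearMap.range Q.mulVecLin)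
    (hker : LinearMap.ker P.mulVecLin ≤ LinearMap.ker R.mulVecLin) (hS : 1 ∈ S) :
    StateKernelTrivialOn P Q R B C D S ↔
      (LinearMap.range D.mulVecLin).comap C.mulVecLin ≤ LinearMap.range P.mulVecLin ∧
        ∀ lam ∈ S, ∀ w u, (cx R - lam • (cx Q * cx P)) *ᵥ w + (cx Q * cx B) *ᵥ u = 0 →
          (cx C * cx P) *ᵥ w + cx D *ᵥ u = 0 → cx P *ᵥ w = 0 := by
  obtain ⟨A₀, hA₀⟩ := exists_eq_mul_mul_of_range_le_of_ker_le him hker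
  refine ⟨fun h => ⟨h.comap_range_le_range hS hA₀,
    fun lam hlam w u => h.cx_mulVec_eq_zero hS hA₀ hlam⟩, ?_⟩
  rintro ⟨hcomap, hred⟩ A hA lam hlam
  exact stateKernelTrivial_of_reduced hA hcomap (hred lam hlam)

theorem rank_equivalence_of_one_mem
    (him : LinearMap.range R.mulVecLin ≤ LinearMap.range Q.mulVecLin)
    (hker : LinearMap.ker P.mulVecLin ≤ LinearMap.ker R.mulVecLin) (hS : 1 ∈ S) :
    (∀ A : Matrix (Fin n) (Fin n) ℝ, R = Q * A * P → ∀ lam ∈ S,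
        (fromBlocks (cx A - lam • 1) (cx B) (cx C) (cx D)).rank = n + (fromRows B D).rank) ↔
      ((LinearMap.range D.mulVecLin).comap C.mulVecLin ≤ LinearMap.range P.mulVecLin ∧
        ∀ lam ∈ S,
          (fromBlocks (cx R - lam • (cx Q * cx P)) (cx Q * cx B) (cx C * cx P) (cx D)).rank
            = P.rank + (fromRows (Q * B) D).rank) := by
  simp only [rank_fromBlocks_cx_eq_iff, rank_fromBlocks_cx_reduced_eq_iff hker]
  exact stateKernelTrivialOn_iff him hker hS

/-- main rank theorem for the affine set 𝒜 = { A : R = Q A P }. -/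
theorem rank_equivalences (n r l m p : ℕ)
    (P : Matrix (Fin n) (Fin r) ℝ) (Q : Matrix (Fin l) (Fin n) ℝ)
    (R : Matrix (Fin l) (Fin r) ℝ)
    (B : Matrix (Fin n) (Fin m) ℝ) (C : Matrix (Fin p) (Fin n) ℝ)
    (D : Matrix (Fin p) (Fin m) ℝ)
    (him : LinearMap.range R.mulVecLin ≤ LinearMap.range Q.mulVecLin)
    (hker : LinearMap.ker P.mulVecLin ≤ LinearMap.ker R.mulVecLin) :
    -- (i)
    ((∀ A : Matrix (Fin n) (Fin n) ℝ, R = Q * A * P → ∀ lam : ℂ,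
        (fromBlocks (cx A - lam • 1) (cx B) (cx C) (cx D)).rank
          = n + (fromRows B D).rank) ↔
      ((LinearMap.range D.mulVecLin).comap C.mulVecLin ≤ LinearMap.range P.mulVecLin ∧
        ∀ lam : ℂ,
          (fromBlocks (cx R - lam • (cx Q * cx P)) (cx Q * cx B) (cx C * cx P) (cx D)).rank
            = P.rank + (fromRows (Q * B) D).rank))
    ∧
    -- (ii)
    ((∀ A : Matrix (Fin n) (Fin n) ℝ, R = Q * A * P → ∀ lam : ℂ, 1 ≤ ‖lam‖ →
        (fromBlocks (cx A - lam • 1) (cx B) (cx C) (cx D)).rank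
          = n + (fromRows B D).rank) ↔
      ((LinearMap.range D.mulVecLin).comap C.mulVecLin ≤ LinearMap.range P.mulVecLin ∧
        ∀ lam : ℂ, 1 ≤ ‖lam‖ →
          (fromBlocks (cx R - lam • (cx Q * cx P)) (cx Q * cx B) (cx C * cx P) (cx D)).rank
            = P.rank + (fromRows (Q * B) D).rank)) :=
  ⟨by simpa only [Set.mem_univ, forall_const] using
      rank_equivalence_of_one_mem him hker (Set.mem_univ 1),
    rank_equivalence_of_one_mem him hker (S := {lam : ℂ | 1 ≤ ‖lam‖}) (by simp)⟩
end

section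
/- Let A ∈ ℝ^{n×n}, B ∈ ℝ^{n×m}, C ∈ ℝ^{p×n}, D ∈ ℝ^{p×m}. The system Σ(A,B,C,D) is strongly observable if and only if for every K ∈ ℝ^{m×n} the pair (C + DK, A + BK) is observable, i.e., for every x₀ ∈ ℝ^n, (C + DK)(A + BK)^t x₀ = 0 for all t ∈ ℕ implies x₀ = 0. The system Σ(A,B,C,D) is strongly detectable if and only if for every K ∈ ℝ^{m×n} the pair (C + DK, A + BK) is detectable, i.e., for every x₀ ∈ ℝ^n, (C + DK)(A + BK)^t x₀ = 0 for all t ∈ ℕ implies (A + BK)^t x₀ → 0 as t → ∞. -/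
open Matrix Filter

/-- State trajectory of the system x(t+1) = A x(t) + B u(t) from initial state x₀. -/
def stateTraj {n m : ℕ} (A : Matrix (Fin n) (Fin n) ℝ) (B : Matrix (Fin n) (Fin m) ℝ)
    (x₀ : Fin n → ℝ) (u : ℕ → Fin m → ℝ) : ℕ → Fin n → ℝ
  | 0 => x₀
  | t + 1 => A.mulVec (stateTraj A B x₀ u t) + B.mulVec (u t)

/-- Σ(A,B,C,D) is strongly observable: zero output for all times implies zero initial state. -/
def StronglyObservable {n m p : ℕ} (A : Matrix (Fin n) (Fin n) ℝ)
    (B : Matrix (Fin n) (Fin m) ℝ) (C : Matrix (Fin p) (Fin n) ℝ)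
    (D : Matrix (Fin p) (Fin m) ℝ) : Prop :=
  ∀ (x₀ : Fin n → ℝ) (u : ℕ → Fin m → ℝ),
    (∀ t : ℕ, C.mulVec (stateTraj A B x₀ u t) + D.mulVec (u t) = 0) → x₀ = 0

/-- Σ(A,B,C,D) is strongly detectable: zero output for all times implies the state
tends to zero. -/
def StronglyDetectable {n m p : ℕ} (A : Matrix (Fin n) (Fin n) ℝ)
    (B : Matrix (Fin n) (Fin m) ℝ) (C : Matrix (Fin p) (Fin n) ℝ)
    (D : Matrix (Fin p) (Fin m) ℝ) : Prop :=
  ∀ (x₀ : Fin n → ℝ) (u : ℕ → Fin m → ℝ),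
    (∀ t : ℕ, C.mulVec (stateTraj A B x₀ u t) + D.mulVec (u t) = 0) →
      Tendsto (fun t : ℕ => stateTraj A B x₀ u t) atTop (nhds 0)

namespace StrongAux

variable {n m p : ℕ} (A : Matrix (Fin n) (Fin n) ℝ) (B : Matrix (Fin n) (Fin m) ℝ)
  (C : Matrix (Fin p) (Fin n) ℝ) (D : Matrix (Fin p) (Fin m) ℝ)

lemma stateTraj_shift (x₀ : Fin n → ℝ) (u : ℕ → Fin m → ℝ) (s t : ℕ) :
    stateTraj A B (stateTraj A B x₀ u s) (fun k => u (k + s)) t = stateTraj A B x₀ u (t + s) := by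
  induction t with
  | zero => rw [Nat.zero_add]; rfl
  | succ t ih =>
    show A.mulVec _ + B.mulVec (u (t + s)) = _
    rw [ih, show t + 1 + s = (t + s) + 1 by omega]
    rfl

lemma stateTraj_add (x y : Fin n → ℝ) (u v : ℕ → Fin m → ℝ) (t : ℕ) :
    stateTraj A B (x + y) (u + v) t = stateTraj A B x u t + stateTraj A B y v t := by
  induction t with
  | zero => rfl
  | succ t ih =>
    show A.mulVec _ + B.mulVec (u t + v t) = _
    rw [ih, mulVec_add, mulVec_add]
    show _ = A.mulVec _ + B.mulVec (u t) + (A.mulVec _ + B.mulVec (v t))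
    abel

lemma stateTraj_smul (c : ℝ) (x : Fin n → ℝ) (u : ℕ → Fin m → ℝ) (t : ℕ) :
    stateTraj A B (c • x) (fun k => c • u k) t = c • stateTraj A B x u t := by
  induction t with
  | zero => rfl
  | succ t ih =>
    show A.mulVec _ + B.mulVec (c • u t) = _
    rw [ih, mulVec_smul, mulVec_smul, ← smul_add]
    rfl

lemma stateTraj_zero (t : ℕ) :
    stateTraj A B (0 : Fin n → ℝ) (0 : ℕ → Fin m → ℝ) t = 0 := by
  induction t with
  | zero => rfl
  | succ t ih =>
    show A.mulVec _ + B.mulVec (0 : Fin m → ℝ) = 0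
    rw [ih, mulVec_zero, mulVec_zero, add_zero]

/-- The weakly unobservable subspace: initial states from which the output can be kept zero. -/
def Vstar : Submodule ℝ (Fin n → ℝ) where
  carrier := {x | ∃ u : ℕ → Fin m → ℝ,
    ∀ t, C.mulVec (stateTraj A B x u t) + D.mulVec (u t) = 0}
  zero_mem' := ⟨0, fun t => by
    rw [stateTraj_zero, mulVec_zero]
    show (0 : Fin p → ℝ) + D.mulVec (0 : Fin m → ℝ) = 0
    rw [mulVec_zero, add_zero]⟩
  add_mem' := by
    rintro x y ⟨u, hu⟩ ⟨v, hv⟩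
    refine ⟨u + v, fun t => ?_⟩
    rw [stateTraj_add, mulVec_add]
    show C.mulVec _ + C.mulVec _ + D.mulVec (u t + v t) = 0
    rw [mulVec_add]
    have := hu t; have := hv t
    calc C.mulVec (stateTraj A B x u t) + C.mulVec (stateTraj A B y v t) +
          (D.mulVec (u t) + D.mulVec (v t))
        = (C.mulVec (stateTraj A B x u t) + D.mulVec (u t)) +
          (C.mulVec (stateTraj A B y v t) + D.mulVec (v t)) := by abel
      _ = 0 := by rw [hu t, hv t, add_zero]
  smul_mem' := by
    rintro c x ⟨u, hu⟩
    refine ⟨fun k => c • u k, fun t => ?_⟩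
    rw [stateTraj_smul, mulVec_smul, mulVec_smul, ← smul_add, hu t, smul_zero]

lemma stateTraj_mem_Vstar (x : Fin n → ℝ) (u : ℕ → Fin m → ℝ)
    (hu : ∀ t, C.mulVec (stateTraj A B x u t) + D.mulVec (u t) = 0) (s : ℕ) :
    stateTraj A B x u s ∈ Vstar A B C D := by
  refine ⟨fun k => u (k + s), fun t => ?_⟩
  rw [stateTraj_shift]
  exact hu (t + s)

lemma exists_feedback : ∃ K : Matrix (Fin m) (Fin n) ℝ,
    ∀ x ∈ Vstar A B C D,
      (C + D * K).mulVec x = 0 ∧ (A + B * K).mulVec x ∈ Vstar A B C D := by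
  classical
  set V := Vstar A B C D with hV
  let W : Submodule ℝ ((Fin n → ℝ) × (Fin m → ℝ)) :=
    { carrier := {z | z.1 ∈ V ∧ C.mulVec z.1 + D.mulVec z.2 = 0 ∧
        A.mulVec z.1 + B.mulVec z.2 ∈ V}
      zero_mem' := by
        refine ⟨V.zero_mem, ?_, ?_⟩
        · show C.mulVec 0 + D.mulVec 0 = 0
          rw [mulVec_zero, mulVec_zero, add_zero]
        · show A.mulVec 0 + B.mulVec 0 ∈ V
          rw [mulVec_zero, mulVec_zero, add_zero]; exact V.zero_mem
      add_mem' := by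
        rintro ⟨x1, x2⟩ ⟨y1, y2⟩ ⟨hx1, hx2, hx3⟩ ⟨hy1, hy2, hy3⟩
        refine ⟨V.add_mem hx1 hy1, ?_, ?_⟩
        · show C.mulVec (x1 + y1) + D.mulVec (x2 + y2) = 0
          rw [mulVec_add, mulVec_add]
          calc C.mulVec x1 + C.mulVec y1 + (D.mulVec x2 + D.mulVec y2)
              = (C.mulVec x1 + D.mulVec x2) + (C.mulVec y1 + D.mulVec y2) := by abel
            _ = 0 := by rw [hx2, hy2, add_zero]
        · show A.mulVec (x1 + y1) + B.mulVec (x2 + y2) ∈ V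
          rw [mulVec_add, mulVec_add]
          have : A.mulVec x1 + A.mulVec y1 + (B.mulVec x2 + B.mulVec y2)
              = (A.mulVec x1 + B.mulVec x2) + (A.mulVec y1 + B.mulVec y2) := by abel
          rw [this]
          exact V.add_mem hx3 hy3
      smul_mem' := by
        rintro c ⟨x1, x2⟩ ⟨hx1, hx2, hx3⟩
        refine ⟨V.smul_mem c hx1, ?_, ?_⟩
        · show C.mulVec (c • x1) + D.mulVec (c • x2) = 0
          rw [mulVec_smul, mulVec_smul, ← smul_add, hx2, smul_zero]
        · show A.mulVec (c • x1) + B.mulVec (c • x2) ∈ V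
          rw [mulVec_smul, mulVec_smul, ← smul_add]
          exact V.smul_mem c hx3 }
  have hWmem : ∀ z : W, (z : (Fin n → ℝ) × (Fin m → ℝ)).1 ∈ V := fun z => z.2.1
  let q : W →ₗ[ℝ] V :=
    LinearMap.codRestrict V ((LinearMap.fst ℝ _ _).comp W.subtype) hWmem
  have hq : LinearMap.range q = ⊤ := by
    rw [LinearMap.range_eq_top]
    rintro ⟨x, hx⟩
    obtain ⟨u, hu⟩ := hx
    have h0 : C.mulVec x + D.mulVec (u 0) = 0 := hu 0
    have h1 : A.mulVec x + B.mulVec (u 0) ∈ V := by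
      have := stateTraj_mem_Vstar A B C D x u hu 1
      exact this
    exact ⟨⟨(x, u 0), ⟨⟨u, hu⟩, h0, h1⟩⟩, rfl⟩
  obtain ⟨g, hg⟩ := LinearMap.exists_rightInverse_of_surjective q hq
  obtain ⟨Vc, hc⟩ := Submodule.exists_isCompl V
  let F₀ : V →ₗ[ℝ] (Fin m → ℝ) := (LinearMap.snd ℝ _ _).comp (W.subtype.comp g)
  let F : (Fin n → ℝ) →ₗ[ℝ] (Fin m → ℝ) := F₀.comp (V.linearProjOfIsCompl Vc hc)
  refine ⟨LinearMap.toMatrix' F, ?_⟩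
  intro x hx
  have hKx : (LinearMap.toMatrix' F).mulVec x = F₀ ⟨x, hx⟩ := by
    have h1 : (LinearMap.toMatrix' F).mulVec x = F x := by
      rw [← Matrix.toLin'_apply, Matrix.toLin'_toMatrix']
    have h2 : (V.linearProjOfIsCompl Vc hc) x = ⟨x, hx⟩ :=
      Submodule.linearProjOfIsCompl_apply_left hc ⟨x, hx⟩
    rw [h1]
    show F₀ ((V.linearProjOfIsCompl Vc hc) x) = _
    rw [h2]
  have hgq : q (g ⟨x, hx⟩) = ⟨x, hx⟩ := by
    have := LinearMap.ext_iff.1 hg ⟨x, hx⟩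
    exact this
  have hfst : ((g ⟨x, hx⟩ : W) : (Fin n → ℝ) × (Fin m → ℝ)).1 = x :=
    congrArg Subtype.val hgq
  have hsnd : ((g ⟨x, hx⟩ : W) : (Fin n → ℝ) × (Fin m → ℝ)).2 = F₀ ⟨x, hx⟩ := rfl
  obtain ⟨hz1, hz2, hz3⟩ := (g ⟨x, hx⟩ : W).2
  rw [hfst] at hz2 hz3
  rw [hsnd] at hz2 hz3
  constructor
  · rw [add_mulVec, ← mulVec_mulVec, hKx]
    exact hz2
  · rw [add_mulVec, ← mulVec_mulVec, hKx]
    exact hz3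

lemma pow_mem_Vstar (K : Matrix (Fin m) (Fin n) ℝ)
    (hK : ∀ x ∈ Vstar A B C D,
      (C + D * K).mulVec x = 0 ∧ (A + B * K).mulVec x ∈ Vstar A B C D)
    (x : Fin n → ℝ) (hx : x ∈ Vstar A B C D) (t : ℕ) :
    ((A + B * K) ^ t).mulVec x ∈ Vstar A B C D := by
  induction t with
  | zero => rw [pow_zero, one_mulVec]; exact hx
  | succ t ih =>
    rw [pow_succ', ← mulVec_mulVec]
    exact (hK _ ih).2

lemma feedback_traj (K : Matrix (Fin m) (Fin n) ℝ) (x₀ : Fin n → ℝ) (t : ℕ) :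
    stateTraj A B x₀ (fun k => K.mulVec (((A + B * K) ^ k).mulVec x₀)) t
      = ((A + B * K) ^ t).mulVec x₀ := by
  induction t with
  | zero => rw [pow_zero, one_mulVec]; rfl
  | succ t ih =>
    show A.mulVec _ + B.mulVec (K.mulVec (((A + B * K) ^ t).mulVec x₀)) = _
    rw [ih, mulVec_mulVec, mulVec_mulVec, mulVec_mulVec, ← add_mulVec, ← add_mul, ← pow_succ']

lemma norm_mulVec_le {a b : ℕ} (M : Matrix (Fin a) (Fin b) ℝ) (x : Fin b → ℝ) :
    ‖M.mulVec x‖ ≤ (∑ i, ∑ j, |M i j|) * ‖x‖ := by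
  have hc : (0:ℝ) ≤ (∑ i, ∑ j, |M i j|) * ‖x‖ := by
    apply mul_nonneg _ (norm_nonneg _)
    exact Finset.sum_nonneg fun i _ => Finset.sum_nonneg fun j _ => abs_nonneg _
  rw [pi_norm_le_iff_of_nonneg hc]
  intro i
  calc ‖M.mulVec x i‖ = |∑ j, M i j * x j| := rfl
    _ ≤ ∑ j, |M i j * x j| := Finset.abs_sum_le_sum_abs _ _
    _ ≤ ∑ j, |M i j| * ‖x‖ := by
        refine Finset.sum_le_sum fun j _ => ?_
        rw [abs_mul]
        exact mul_le_mul_of_nonneg_left (norm_le_pi_norm x j) (abs_nonneg _)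
    _ = (∑ j, |M i j|) * ‖x‖ := by rw [Finset.sum_mul]
    _ ≤ (∑ i, ∑ j, |M i j|) * ‖x‖ := by
        apply mul_le_mul_of_nonneg_right _ (norm_nonneg _)
        exact Finset.single_le_sum
          (fun k (_ : k ∈ Finset.univ) => Finset.sum_nonneg fun j _ => abs_nonneg (M k j))
          (Finset.mem_univ i)

lemma abs_dotProduct_le {a : ℕ} (w x : Fin a → ℝ) :
    |w ⬝ᵥ x| ≤ (∑ i, |w i|) * ‖x‖ := by
  calc |∑ i, w i * x i| ≤ ∑ i, |w i * x i| := Finset.abs_sum_le_sum_abs _ _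
    _ ≤ ∑ i, |w i| * ‖x‖ := by
        refine Finset.sum_le_sum fun i _ => ?_
        rw [abs_mul]
        exact mul_le_mul_of_nonneg_left (norm_le_pi_norm x i) (abs_nonneg _)
    _ = (∑ i, |w i|) * ‖x‖ := by rw [Finset.sum_mul]

set_option maxHeartbeats 1600000 in
lemma Bv_eq_zero
    (Hdet : ∀ K : Matrix (Fin m) (Fin n) ℝ, ∀ x₀ : Fin n → ℝ,
      (∀ t : ℕ, (C + D * K).mulVec (((A + B * K) ^ t).mulVec x₀) = 0) →
        Tendsto (fun t : ℕ => ((A + B * K) ^ t).mulVec x₀) atTop (nhds 0))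
    (K : Matrix (Fin m) (Fin n) ℝ)
    (hK : ∀ x ∈ Vstar A B C D,
      (C + D * K).mulVec x = 0 ∧ (A + B * K).mulVec x ∈ Vstar A B C D)
    (v : Fin m → ℝ) (hv : D.mulVec v = 0) (hmem : B.mulVec v ∈ Vstar A B C D) :
    B.mulVec v = 0 := by
  by_contra hne
  set V := Vstar A B C D with hVdef
  set w : Fin n → ℝ := B.mulVec v with hwdef
  set M : Matrix (Fin n) (Fin n) ℝ := A + B * K with hMdef
  have hdd : 0 < w ⬝ᵥ w := by
    rcases lt_or_eq_of_le (Finset.sum_nonneg fun i _ => mul_self_nonneg (w i)) with h | h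
    · exact h
    · exact absurd (dotProduct_self_eq_zero.mp h.symm) hne
  set dd : ℝ := w ⬝ᵥ w with hdddef
  set sw : ℝ := ∑ i, |w i| with hswdef
  have hsw0 : 0 ≤ sw := Finset.sum_nonneg fun i _ => abs_nonneg _
  set ca : ℝ := sw / dd + 1 with hcadef
  have hca1 : 1 ≤ ca := le_add_of_nonneg_left (div_nonneg hsw0 hdd.le)
  have hca0 : 0 < ca := lt_of_lt_of_le one_pos hca1
  have hcabound : ∀ x : Fin n → ℝ, |w ⬝ᵥ x| / dd ≤ ca * ‖x‖ := by
    intro x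
    rw [div_le_iff₀ hdd]
    calc |w ⬝ᵥ x| ≤ sw * ‖x‖ := abs_dotProduct_le w x
      _ = (sw / dd) * ‖x‖ * dd := by field_simp
      _ ≤ ca * ‖x‖ * dd := by
          have : sw / dd ≤ ca := by rw [hcadef]; linarith
          exact mul_le_mul_of_nonneg_right
            (mul_le_mul_of_nonneg_right this (norm_nonneg _)) hdd.le
  set cM : ℝ := ∑ i, ∑ j, |M i j| with hcMdef
  have hcM0 : 0 ≤ cM := Finset.sum_nonneg fun i _ => Finset.sum_nonneg fun j _ => abs_nonneg _
  have hcMbound : ∀ x : Fin n → ℝ, ‖M.mulVec x‖ ≤ cM * ‖x‖ := fun x => norm_mulVec_le M x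
  set E : ℝ := ca * cM * ‖w‖ + cM + 1 with hEdef
  have hE1 : 1 ≤ E := by
    have h1 : 0 ≤ ca * cM * ‖w‖ :=
      mul_nonneg (mul_nonneg hca0.le hcM0) (norm_nonneg _)
    rw [hEdef]; linarith
  have hcME : cM ≤ E := by
    have h1 : 0 ≤ ca * cM * ‖w‖ :=
      mul_nonneg (mul_nonneg hca0.le hcM0) (norm_nonneg _)
    rw [hEdef]; linarith
  have hcacME : ca * cM * ‖w‖ ≤ E := by rw [hEdef]; linarith
  set lam : ℝ := 6 * E with hlamdef
  set Kl : Matrix (Fin m) (Fin n) ℝ := K + (lam / dd) • vecMulVec v w with hKldef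
  -- D * vecMulVec v w = 0
  have hDvw : D * vecMulVec v w = 0 := by
    ext i j
    have h0 : D.mulVec v i = 0 := congrFun hv i
    show ∑ k, D i k * vecMulVec v w k j = 0
    calc ∑ k, D i k * vecMulVec v w k j = ∑ k, (D i k * v k) * w j := by
          refine Finset.sum_congr rfl fun k _ => ?_
          rw [vecMulVec_apply]; ring
      _ = (∑ k, D i k * v k) * w j := (Finset.sum_mul _ _ _).symm
      _ = D.mulVec v i * w j := rfl
      _ = 0 := by rw [h0, zero_mul]
  have hCDKl : C + D * Kl = C + D * K := by
    rw [hKldef, Matrix.mul_add, Matrix.mul_smul, hDvw, smul_zero, add_zero]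
  -- the rank-one perturbed step
  have hBvw : ∀ x : Fin n → ℝ, (B * vecMulVec v w).mulVec x = (w ⬝ᵥ x) • w := by
    intro x
    rw [← mulVec_mulVec]
    have h1 : (vecMulVec v w).mulVec x = (w ⬝ᵥ x) • v := by
      ext i
      show ∑ j, vecMulVec v w i j * x j = (w ⬝ᵥ x) * v i
      calc ∑ j, vecMulVec v w i j * x j = ∑ j, (w j * x j) * v i := by
            refine Finset.sum_congr rfl fun j _ => ?_
            rw [vecMulVec_apply]; ring
        _ = (∑ j, w j * x j) * v i := (Finset.sum_mul _ _ _).symm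
        _ = (w ⬝ᵥ x) * v i := rfl
    rw [h1, mulVec_smul]
  have hstep : ∀ x : Fin n → ℝ,
      (A + B * Kl).mulVec x = M.mulVec x + (lam * ((w ⬝ᵥ x) / dd)) • w := by
    intro x
    have : A + B * Kl = M + (lam / dd) • (B * vecMulVec v w) := by
      rw [hKldef, Matrix.mul_add, Matrix.mul_smul, hMdef, add_assoc]
    rw [this, add_mulVec, smul_mulVec, hBvw, smul_smul]
    congr 2
    ring
  -- the trajectory of the perturbed closed loop starting at w
  set X : ℕ → Fin n → ℝ := fun t => ((A + B * Kl) ^ t).mulVec w with hXdef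
  have hXsucc : ∀ t, X (t + 1) = (A + B * Kl).mulVec (X t) := by
    intro t
    show ((A + B * Kl) ^ (t + 1)).mulVec w = _
    rw [pow_succ', ← mulVec_mulVec]
  set bfun : ℕ → ℝ := fun t => (w ⬝ᵥ X t) / dd with hbdef
  have hinv : ∀ t, X t ∈ V ∧ 1 ≤ bfun t ∧ ‖X t‖ ≤ 2 * ‖w‖ * bfun t := by
    intro t
    induction t with
    | zero =>
      have hX0 : X 0 = w := by show ((A + B * Kl) ^ 0).mulVec w = w; rw [pow_zero, one_mulVec]
      have hb0 : bfun 0 = 1 := by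
        show (w ⬝ᵥ X 0) / dd = 1
        rw [hX0]; exact div_self hdd.ne'
      refine ⟨by rw [hX0]; exact hmem, by rw [hb0], ?_⟩
      rw [hX0, hb0]
      have := norm_nonneg w
      linarith
    | succ t ih =>
      obtain ⟨hV1, hb1, hn1⟩ := ih
      have hstep' : X (t + 1) = M.mulVec (X t) + (lam * bfun t) • w := by
        rw [hXsucc, hstep]
      -- membership
      have hmem' : X (t + 1) ∈ V := by
        rw [hstep']
        exact V.add_mem (hK _ hV1).2 (V.smul_mem _ hmem)
      -- the new inner product value
      set q : ℝ := (w ⬝ᵥ M.mulVec (X t)) / dd with hqdef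
      have hbsucc : bfun (t + 1) = q + lam * bfun t := by
        show (w ⬝ᵥ X (t + 1)) / dd = q + lam * bfun t
        rw [hstep', dotProduct_add, dotProduct_smul, smul_eq_mul, add_div, hqdef,
          mul_div_assoc]
        congr 1
        rw [← hdddef, div_self hdd.ne', mul_one]
      have hqabs : |q| ≤ 2 * E * bfun t := by
        have h1 : |q| ≤ ca * ‖M.mulVec (X t)‖ := by
          rw [hqdef, abs_div, abs_of_pos hdd]; exact hcabound _
        have h2 : ‖M.mulVec (X t)‖ ≤ cM * ‖X t‖ := hcMbound _
        have h3 : ca * ‖M.mulVec (X t)‖ ≤ ca * (cM * ‖X t‖) :=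
          mul_le_mul_of_nonneg_left h2 hca0.le
        have h4 : ca * (cM * ‖X t‖) ≤ ca * (cM * (2 * ‖w‖ * bfun t)) := by
          apply mul_le_mul_of_nonneg_left _ hca0.le
          exact mul_le_mul_of_nonneg_left hn1 hcM0
        have h5 : ca * (cM * (2 * ‖w‖ * bfun t)) = 2 * (ca * cM * ‖w‖) * bfun t := by ring
        have h6 : 2 * (ca * cM * ‖w‖) * bfun t ≤ 2 * E * bfun t := by
          apply mul_le_mul_of_nonneg_right _ (by linarith : (0:ℝ) ≤ bfun t)
          linarith
        linarith
      have hqge : -(2 * E * bfun t) ≤ q := (abs_le.mp hqabs).1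
      have hqle : q ≤ 2 * E * bfun t := (abs_le.mp hqabs).2
      have hbnew : 1 ≤ bfun (t + 1) := by
        rw [hbsucc, hlamdef]
        nlinarith [mul_le_mul_of_nonneg_left hb1 (by linarith : (0:ℝ) ≤ E)]
      refine ⟨hmem', hbnew, ?_⟩
      -- norm bound
      have hnorm1 : ‖X (t + 1)‖ ≤ cM * ‖X t‖ + lam * bfun t * ‖w‖ := by
        rw [hstep']
        calc ‖M.mulVec (X t) + (lam * bfun t) • w‖
            ≤ ‖M.mulVec (X t)‖ + ‖(lam * bfun t) • w‖ := norm_add_le _ _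
          _ = ‖M.mulVec (X t)‖ + |lam * bfun t| * ‖w‖ := by
              rw [norm_smul, Real.norm_eq_abs]
          _ ≤ cM * ‖X t‖ + lam * bfun t * ‖w‖ := by
              have hlb : 0 ≤ lam * bfun t := by
                apply mul_nonneg _ (by linarith)
                rw [hlamdef]; linarith
              rw [abs_of_nonneg hlb]
              exact add_le_add (hcMbound _) le_rfl
      rw [hbsucc, hlamdef]
      rw [hlamdef] at hnorm1
      have hw0 : (0:ℝ) ≤ ‖w‖ := norm_nonneg _
      nlinarith [mul_le_mul_of_nonneg_right (mul_le_mul_of_nonneg_right hcME hw0)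
          (by linarith : (0:ℝ) ≤ bfun t),
        mul_le_mul_of_nonneg_left hqge (by linarith : (0:ℝ) ≤ 2 * ‖w‖),
        mul_le_mul_of_nonneg_left hn1 hcM0]
    -- apply the detectability hypothesis
  have hout : ∀ t : ℕ, (C + D * Kl).mulVec (((A + B * Kl) ^ t).mulVec w) = 0 := by
    intro t
    have : ((A + B * Kl) ^ t).mulVec w ∈ V := (hinv t).1
    rw [hCDKl]
    exact (hK _ this).1
  have hT : Tendsto (fun t : ℕ => ((A + B * Kl) ^ t).mulVec w) atTop (nhds 0) :=
    Hdet Kl w hout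
  -- contradiction: ‖X t‖ is bounded below by 1/ca > 0
  obtain ⟨N, hN⟩ := (Metric.tendsto_atTop.mp hT) (1 / ca) (by positivity)
  have hdist := hN N le_rfl
  rw [dist_zero_right] at hdist
  have hlow : 1 / ca ≤ ‖X N‖ := by
    have h1 : 1 ≤ bfun N := (hinv N).2.1
    have h2 : bfun N ≤ ca * ‖X N‖ := by
      have : bfun N ≤ |w ⬝ᵥ X N| / dd := by
        show (w ⬝ᵥ X N) / dd ≤ |w ⬝ᵥ X N| / dd
        gcongr
        exact le_abs_self _
      exact le_trans this (hcabound _)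
    rw [div_le_iff₀ hca0]
    calc (1:ℝ) ≤ bfun N := h1
      _ ≤ ca * ‖X N‖ := h2
      _ = ‖X N‖ * ca := mul_comm _ _
  exact absurd hdist (not_lt.mpr hlow)

end StrongAux

/-- strong observability (detectability) is equivalent to observability
(detectability) of (C + DK, A + BK) for every feedback K. -/
theorem strongly_observable_detectable_iff_feedback (n m p : ℕ)
    (A : Matrix (Fin n) (Fin n) ℝ) (B : Matrix (Fin n) (Fin m) ℝ)
    (C : Matrix (Fin p) (Fin n) ℝ) (D : Matrix (Fin p) (Fin m) ℝ) :
    (StronglyObservable A B C D ↔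
      ∀ K : Matrix (Fin m) (Fin n) ℝ, ∀ x₀ : Fin n → ℝ,
        (∀ t : ℕ, (C + D * K).mulVec (((A + B * K) ^ t).mulVec x₀) = 0) → x₀ = 0)
    ∧
    (StronglyDetectable A B C D ↔
      ∀ K : Matrix (Fin m) (Fin n) ℝ, ∀ x₀ : Fin n → ℝ,
        (∀ t : ℕ, (C + D * K).mulVec (((A + B * K) ^ t).mulVec x₀) = 0) →
          Tendsto (fun t : ℕ => ((A + B * K) ^ t).mulVec x₀) atTop (nhds 0)) := by
  obtain ⟨K0, hK0⟩ := StrongAux.exists_feedback A B C D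
  have hfbout : ∀ (K : Matrix (Fin m) (Fin n) ℝ) (x₀ : Fin n → ℝ),
      (∀ t : ℕ, (C + D * K).mulVec (((A + B * K) ^ t).mulVec x₀) = 0) →
      ∀ t : ℕ, C.mulVec (stateTraj A B x₀
          (fun k => K.mulVec (((A + B * K) ^ k).mulVec x₀)) t)
        + D.mulVec (K.mulVec (((A + B * K) ^ t).mulVec x₀)) = 0 := by
    intro K x₀ h0 t
    have h1 := h0 t
    rw [add_mulVec, ← mulVec_mulVec] at h1
    rw [StrongAux.feedback_traj]
    exact h1
  constructor
  · constructor
    · intro h K x₀ h0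
      exact h x₀ (fun k => K.mulVec (((A + B * K) ^ k).mulVec x₀)) (hfbout K x₀ h0)
    · intro h x₀ u hu
      have hx₀ : x₀ ∈ StrongAux.Vstar A B C D := ⟨u, hu⟩
      exact h K0 x₀ fun t =>
        (hK0 _ (StrongAux.pow_mem_Vstar A B C D K0 hK0 x₀ hx₀ t)).1
  · constructor
    · intro h K x₀ h0
      have hT := h x₀ (fun k => K.mulVec (((A + B * K) ^ k).mulVec x₀)) (hfbout K x₀ h0)
      exact hT.congr fun t => StrongAux.feedback_traj A B K x₀ t
    · intro h x₀ u hu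
      have hx₀ : x₀ ∈ StrongAux.Vstar A B C D := ⟨u, hu⟩
      have hxt : ∀ t, stateTraj A B x₀ u t = ((A + B * K0) ^ t).mulVec x₀ := by
        intro t
        induction t with
        | zero => rw [pow_zero, one_mulVec]; rfl
        | succ t ih =>
          have hmemt : stateTraj A B x₀ u t ∈ StrongAux.Vstar A B C D :=
            StrongAux.stateTraj_mem_Vstar A B C D x₀ u hu t
          have hmemt1 : stateTraj A B x₀ u (t + 1) ∈ StrongAux.Vstar A B C D :=
            StrongAux.stateTraj_mem_Vstar A B C D x₀ u hu (t + 1)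
          set xt := stateTraj A B x₀ u t with hxtdef
          have hDv' : D.mulVec (u t - K0.mulVec xt) = 0 := by
            rw [mulVec_sub]
            have h2 := (hK0 xt hmemt).1
            rw [add_mulVec, ← mulVec_mulVec] at h2
            calc D.mulVec (u t) - D.mulVec (K0.mulVec xt)
                = (C.mulVec xt + D.mulVec (u t))
                  - (C.mulVec xt + D.mulVec (K0.mulVec xt)) := by abel
              _ = 0 := by rw [hu t, h2, sub_zero]
          have hBv' : B.mulVec (u t - K0.mulVec xt)
              = stateTraj A B x₀ u (t + 1) - (A + B * K0).mulVec xt := by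
            rw [mulVec_sub]
            have e1 : stateTraj A B x₀ u (t + 1) = A.mulVec xt + B.mulVec (u t) := rfl
            have e2 : (A + B * K0).mulVec xt = A.mulVec xt + B.mulVec (K0.mulVec xt) := by
              rw [add_mulVec, ← mulVec_mulVec]
            rw [e1, e2]
            abel
          have hBmem : B.mulVec (u t - K0.mulVec xt) ∈ StrongAux.Vstar A B C D := by
            rw [hBv']
            exact Submodule.sub_mem _ hmemt1 (hK0 xt hmemt).2
          have hB0 : B.mulVec (u t - K0.mulVec xt) = 0 :=
            StrongAux.Bv_eq_zero A B C D h K0 hK0 _ hDv' hBmem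
          have hstep : stateTraj A B x₀ u (t + 1) = (A + B * K0).mulVec xt :=
            sub_eq_zero.mp (hBv'.symm.trans hB0)
          rw [hstep, ih, mulVec_mulVec, ← pow_succ']
      have hout : ∀ t : ℕ, (C + D * K0).mulVec (((A + B * K0) ^ t).mulVec x₀) = 0 := by
        intro t
        rw [← hxt t]
        exact (hK0 _ (StrongAux.stateTraj_mem_Vstar A B C D x₀ u hu t)).1
      exact (h K0 x₀ hout).congr fun t => (hxt t).symm
end

section
/- In the data setting, the data (U₋, X, Y₋) are informative for strong controllability (i.e., for every A ∈ 𝒜_dat, every L ∈ ℝ^{n×p} and every λ ∈ ℂ, rank [A + LC − λI, B + LD] = n) if and only if ker M ⊆ B(ker D) and rank [[R − λMX₋, MB],[CX₋, D]] = rank M + rank [CX₋, D] for all λ ∈ ℂ. The data are informative for strong stabilizability (the same with λ restricted to |λ| ≥ 1) if and only if ker M ⊆ B(ker D) and the same rank condition holds for all λ ∈ ℂ with |λ| ≥ 1. -/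
/-!
The consistent set `Adat` is the affine space `{A | M A X₋ = R}`. A vector `ξ ≠ 0` violating the
Hautus test for `(A + LC, B + LD)` at `λ` satisfies, with `η = ξL`, the relations `ξB + ηD = 0`
and `(λξ - ξA - ηC) X₋ = 0`. When `ker M ⊆ B (ker D)`, the first relation puts `ξ` in the row
space of `M` (by duality), so `ξ A X₋` is determined by `R`, and the rank condition, read in
left-kernel form, excludes such `ξ`. Conversely, a solution `(ξ, η)` of the relations becomes a
violation of the test after perturbing `A` inside `Adat` and choosing `L` with `ξL = η`; a vector
`ξ` outside the row space of `M` admits the perturbation `A + u w` with `M u = 0`. The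
perturbations must be real: if `Re ξ` and `Im ξ` are independent, real rank-two matrices realise
every complex value of `ξ Δ`; otherwise `ξ` is a multiple of a real vector, and a real combination
of the relations yields a violation at a real eigenvalue, which suffices since both sets of `λ`
contain a real number.
-/

open Matrix

/-- First T columns of the state data matrix X. -/
def Xminus {n T : ℕ} (X : Matrix (Fin n) (Fin (T + 1)) ℝ) : Matrix (Fin n) (Fin T) ℝ :=
  Matrix.of fun i t => X i t.castSucc

/-- Last T columns of the state data matrix X. -/
def Xplus {n T : ℕ} (X : Matrix (Fin n) (Fin (T + 1)) ℝ) : Matrix (Fin n) (Fin T) ℝ :=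
  Matrix.of fun i t => X i t.succ

/-- The set of state matrices A consistent with the noisy data (U₋, X, Y₋). -/
def Adat {n m p q T : ℕ} (B : Matrix (Fin n) (Fin m) ℝ) (C : Matrix (Fin p) (Fin n) ℝ)
    (D : Matrix (Fin p) (Fin m) ℝ) (E : Matrix (Fin n) (Fin q) ℝ)
    (F : Matrix (Fin p) (Fin q) ℝ) (U : Matrix (Fin m) (Fin T) ℝ)
    (X : Matrix (Fin n) (Fin (T + 1)) ℝ) (Y : Matrix (Fin p) (Fin T) ℝ) :
    Set (Matrix (Fin n) (Fin n) ℝ) :=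
  {A | ∃ W : Matrix (Fin q) (Fin T) ℝ,
    Xplus X = A * Xminus X + B * U + E * W ∧ Y = C * Xminus X + D * U + F * W}

open Module LinearMap Complex

section LinearAlgebra

variable {K : Type*} [Field K] {m m' n c : Type*} [Fintype m] [Fintype m'] [Fintype n]

lemma Matrix.rank_eq_finrank_range_vecMulLinear (A : Matrix m n K) :
    A.rank = finrank K (range A.vecMulLinear) := by
  rw [← rank_transpose, rank, mulVecLin_transpose]

lemma Matrix.rank_eq_card_iff_vecMul_eq_zero (A : Matrix m n K) :
    A.rank = Fintype.card m ↔ ∀ ξ : m → K, ξ ᵥ* A = 0 → ξ = 0 := by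
  rw [rank_eq_finrank_range_vecMulLinear, ← finrank_fintype_fun_eq_card K,
    ← finrank_range_add_finrank_ker A.vecMulLinear, left_eq_add, Submodule.finrank_eq_zero,
    ker_eq_bot']
  rfl

lemma Matrix.rank_fromRows (P : Matrix m n K) (Q : Matrix m' n K) :
    (fromRows P Q).rank = finrank K ↥(range P.vecMulLinear ⊔ range Q.vecMulLinear) := by
  rw [rank_eq_finrank_range_vecMulLinear, range_vecMulLinear, range_vecMulLinear,
    range_vecMulLinear, ← Submodule.span_union, ← Set.Sum.elim_range]
  rfl

lemma LinearMap.finrank_range_comp_sup_eq_add_iff {V₁ V₂ V W : Type*} [AddCommGroup V₁]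
    [Module K V₁] [AddCommGroup V₂] [Module K V₂] [AddCommGroup V] [Module K V] [AddCommGroup W]
    [Module K W] [FiniteDimensional K V] [FiniteDimensional K W]
    (a : V₁ →ₗ[K] V) (b : V →ₗ[K] W) (g : V₂ →ₗ[K] W) :
    finrank K ↥(range (b ∘ₗ a) ⊔ range g) = finrank K (range a) + finrank K (range g) ↔
      ∀ x y, b (a x) + g y = 0 → a x = 0 := by
  set θ := (b ∘ₗ (range a).subtype).coprod (range g).subtype
  have hθ : range θ = range (b ∘ₗ a) ⊔ range g := by
    rw [range_coprod, range_comp, range_comp, Submodule.range_subtype, Submodule.range_subtype]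
  have hdim := finrank_range_add_finrank_ker θ
  rw [finrank_prod, hθ] at hdim
  rw [← hdim, left_eq_add, Submodule.finrank_eq_zero, ker_eq_bot']
  constructor
  · intro h x y hxy
    have := h (⟨a x, mem_range_self a x⟩, ⟨g y, mem_range_self g y⟩) hxy
    simpa using congrArg (fun p => (p.1 : V)) this
  · rintro h ⟨⟨_, x, rfl⟩, ⟨_, y, rfl⟩⟩ hxy
    have hx : a x = 0 := h x y hxy
    have hy : g y = 0 := by simpa [θ, hx] using hxy
    ext <;> simp [hx, hy]

lemma Matrix.rank_fromRows_mul_eq_add_iff [Fintype c] (P : Matrix m n K) (W : Matrix n c K)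
    (Q : Matrix m' c K) :
    (fromRows (P * W) Q).rank = P.rank + Q.rank ↔
      ∀ g η, g ᵥ* P ᵥ* W + η ᵥ* Q = 0 → g ᵥ* P = 0 := by
  have hPW : (P * W).vecMulLinear = W.vecMulLinear ∘ₗ P.vecMulLinear :=
    LinearMap.ext fun g => (vecMul_vecMul g P W).symm
  rw [rank_fromRows, rank_eq_finrank_range_vecMulLinear P, rank_eq_finrank_range_vecMulLinear Q,
    hPW]
  exact finrank_range_comp_sup_eq_add_iff _ _ _

lemma Matrix.exists_vecMul_eq_of_forall_mulVec_eq_zero (A : Matrix m n K) (ξ : n → K)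
    (h : ∀ x, A *ᵥ x = 0 → ξ ⬝ᵥ x = 0) : ∃ g : m → K, g ᵥ* A = ξ := by
  classical
  have hξ : dotProductEquiv K n ξ ∈ (ker A.mulVecLin).dualAnnihilator :=
    (Submodule.mem_dualAnnihilator _).2 fun x hx => h x hx
  rw [← range_dualMap_eq_dualAnnihilator_ker] at hξ
  obtain ⟨ψ, hψ⟩ := hξ
  refine ⟨(dotProductEquiv K m).symm ψ,
    (dotProductEquiv K n).injective (LinearMap.ext fun x => ?_)⟩
  rw [← hψ, dotProductEquiv_apply_apply, ← dotProduct_mulVec]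
  exact LinearMap.congr_fun ((dotProductEquiv K m).apply_symm_apply ψ) (A *ᵥ x)

lemma Matrix.ker_mulVecLin_le_map_ker_iff {p k : Type*} [Fintype p] [Fintype k]
    (M : Matrix k n K) (B : Matrix n m K) (D : Matrix p m K) :
    ker M.mulVecLin ≤ (ker D.mulVecLin).map B.mulVecLin ↔
      ∀ ξ η, ξ ᵥ* B + η ᵥ* D = 0 → ∃ g, g ᵥ* M = ξ := by
  classical
  constructor
  · intro h ξ η hξη
    refine M.exists_vecMul_eq_of_forall_mulVec_eq_zero ξ fun x hx => ?_
    obtain ⟨u, hu, rfl⟩ := h hx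
    rw [mulVecLin_apply, dotProduct_mulVec, eq_neg_of_add_eq_zero_left hξη, neg_dotProduct,
      ← dotProduct_mulVec, show D *ᵥ u = 0 from hu, dotProduct_zero, neg_zero]
  · intro h x hx
    rw [← Subspace.forall_mem_dualAnnihilator_apply_eq_zero_iff]
    intro φ hφ
    obtain ⟨ξ, rfl⟩ := (dotProductEquiv K n).surjective φ
    have hξB : ∀ u, D *ᵥ u = 0 → ξ ᵥ* B ⬝ᵥ u = 0 := fun u hu => by
      rw [← dotProduct_mulVec]
      exact (Submodule.mem_dualAnnihilator _).1 hφ _ ⟨u, hu, rfl⟩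
    obtain ⟨η, hη⟩ := D.exists_vecMul_eq_of_forall_mulVec_eq_zero _ hξB
    obtain ⟨g, rfl⟩ := h ξ (-η) (by rw [neg_vecMul, hη, add_neg_cancel])
    rw [dotProductEquiv_apply_apply, ← dotProduct_mulVec, show M *ᵥ x = 0 from hx,
      dotProduct_zero]

lemma Matrix.exists_mul_eq_iff_mul_eq_zero {k p q τ : Type*} [Fintype p] [Fintype q]
    {P : Matrix k p K} {Q : Matrix p q K} (h : ker P.mulVecLin = range Q.mulVecLin)
    (Z : Matrix p τ K) : (∃ W : Matrix q τ K, Q * W = Z) ↔ P * Z = 0 := by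
  constructor
  · rintro ⟨W, rfl⟩
    have hPQ : P * Q = 0 := by
      classical
      ext i j
      have : Q *ᵥ Pi.single j 1 ∈ ker P.mulVecLin := h ▸ mem_range_self _ _
      simpa [mul_apply, mulVec, dotProduct] using congrFun this i
    rw [← Matrix.mul_assoc, hPQ, Matrix.zero_mul]
  · intro hZ
    have hcol (t : τ) : ∃ w, Q *ᵥ w = fun i => Z i t := by
      have hker : (fun i => Z i t) ∈ ker P.mulVecLin := by
        ext i
        simpa [mulVec, dotProduct, mul_apply] using congrFun (congrFun hZ i) t
      rwa [h] at hker
    choose w hw using hcol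
    refine ⟨of fun j t => w t j, ?_⟩
    ext i t
    simpa [mul_apply, mulVec, dotProduct, mul_comm] using congrFun (hw t) i

lemma exists_dotProduct_eq_of_linearIndependent {r : Type*} [Fintype r] {v : r → n → K}
    (hv : LinearIndependent K v) (e : r → K) : ∃ u : n → K, ∀ i, v i ⬝ᵥ u = e i := by
  have hrank : (of v).rank = Fintype.card r := LinearIndependent.rank_matrix hv
  have htop : range (of v).mulVecLin = ⊤ := by
    apply Submodule.eq_top_of_finrank_eq
    rw [← Matrix.rank, hrank, finrank_fintype_fun_eq_card]
  obtain ⟨u, hu⟩ : e ∈ range (of v).mulVecLin := htop ▸ Submodule.mem_top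
  exact ⟨u, fun i => congrFun hu i⟩

lemma Matrix.rank_map_algebraMap_s10 {K L : Type*} [Field K] [Field L] [Algebra K L]
    (A : Matrix m n K) : (A.map (algebraMap K L)).rank = A.rank := by
  obtain ⟨κ, a, ha, hspan, hli⟩ := exists_linearIndependent' K A.col
  have : Fintype κ := Fintype.ofInjective a ha
  let φ : (m → K) →ₗ[K] (m → L) := (Algebra.linearMap K L).compLeft m
  have hli' : LinearIndependent L fun i => φ (A.col (a i)) :=
    linearIndependent_algebraMap_comp_iff.2 hli
  have hspan' : Submodule.span L (Set.range (A.map (algebraMap K L)).col) =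
      Submodule.span L (Set.range fun i => φ (A.col (a i))) := by
    apply le_antisymm
    · rw [Submodule.span_le]
      rintro _ ⟨j, rfl⟩
      have hj : A.col j ∈ Submodule.span K (Set.range (A.col ∘ a)) :=
        hspan ▸ Submodule.subset_span ⟨j, rfl⟩
      have := Submodule.span_le_restrictScalars K L _
        (Submodule.apply_mem_span_image_of_mem_span φ hj)
      rwa [← Set.range_comp] at this
    · exact Submodule.span_mono (Set.range_subset_iff.2 fun i => ⟨a i, rfl⟩)
  rw [rank_eq_finrank_span_cols, rank_eq_finrank_span_cols, hspan', ← hspan,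
    finrank_span_eq_card hli', finrank_span_eq_card hli]

end LinearAlgebra

local notation:max A "^ℂ" => Matrix.map A (algebraMap ℝ ℂ)

section Complexification

variable {m n c τ : Type*} [Fintype m]

lemma LinearMap.comp_vecMul_map (φ : ℂ →ₗ[ℝ] ℝ) (x : m → ℂ) (A : Matrix m n ℝ) :
    φ ∘ (x ᵥ* A^ℂ) = (φ ∘ x) ᵥ* A := by
  ext j
  simp [vecMul, dotProduct, mul_comm (x _), ← Complex.real_smul, mul_comm (A _ j)]

lemma ofReal_comp_vecMul (x : m → ℝ) (A : Matrix m n ℝ) :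
    (ofReal ∘ x) ᵥ* A^ℂ = ofReal ∘ (x ᵥ* A) := by
  ext j; simp [vecMul, dotProduct]

lemma exists_smul_eq_ofReal_of_not_linearIndependent {ξ : n → ℂ}
    (hξ : ¬LinearIndependent ℝ ![re ∘ ξ, im ∘ ξ]) :
    ∃ c : ℂ, c ≠ 0 ∧ ∃ ζ : n → ℝ, c • ξ = ofReal ∘ ζ := by
  rw [LinearIndependent.pair_iff] at hξ
  push Not at hξ
  obtain ⟨s, t, hst, hne⟩ := hξ
  refine ⟨t + s * I, fun h => hne ?_ ?_, fun i => t * (ξ i).re - s * (ξ i).im, ?_⟩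
  · simpa using congrArg im h
  · simpa using congrArg re h
  · ext i
    have := congrFun hst i
    apply Complex.ext
    · simp
    · simp at this ⊢
      linarith

/-- When `ξ ⬝ᵥ u₁ = 1` and `ξ ⬝ᵥ u₂ = I`, this is a real matrix `Δ` with `ξ ᵥ* Δ = d`. -/
def realPreimage (u₁ u₂ : n → ℝ) (d : c → ℂ) : Matrix n c ℝ :=
  vecMulVec u₁ (re ∘ d) + vecMulVec u₂ (im ∘ d)

lemma realPreimage_zero (u₁ u₂ : n → ℝ) : realPreimage u₁ u₂ (0 : c → ℂ) = 0 := by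
  ext; simp [realPreimage, vecMulVec]

lemma realPreimage_mul [Fintype c] (u₁ u₂ : n → ℝ) (d : c → ℂ) (X : Matrix c τ ℝ) :
    realPreimage u₁ u₂ d * X = realPreimage u₁ u₂ (d ᵥ* X^ℂ) := by
  rw [realPreimage, realPreimage, Matrix.add_mul, vecMulVec_mul, vecMulVec_mul, ← reLm_coe,
    ← imLm_coe, comp_vecMul_map, comp_vecMul_map]

variable [Fintype n]

lemma vecMul_realPreimage {ξ : n → ℂ} {u₁ u₂ : n → ℝ} (h₁ : ξ ⬝ᵥ (ofReal ∘ u₁) = 1)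
    (h₂ : ξ ⬝ᵥ (ofReal ∘ u₂) = I) (d : c → ℂ) : ξ ᵥ* (realPreimage u₁ u₂ d)^ℂ = d := by
  have hmap (u : n → ℝ) (e : c → ℝ) : (vecMulVec u e)^ℂ = vecMulVec (ofReal ∘ u) (ofReal ∘ e) := by
    ext; simp [vecMulVec]
  rw [realPreimage, Matrix.map_add _ (map_add _), vecMul_add, hmap, hmap, vecMul_vecMulVec,
    vecMul_vecMulVec, h₁, h₂]
  ext j
  simp [mul_comm I, re_add_im]

lemma exists_dotProduct_ofReal_eq {ξ : n → ℂ} (hξ : LinearIndependent ℝ ![re ∘ ξ, im ∘ ξ])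
    (w : ℂ) : ∃ u : n → ℝ, ξ ⬝ᵥ (ofReal ∘ u) = w := by
  obtain ⟨u, hu⟩ := exists_dotProduct_eq_of_linearIndependent hξ ![w.re, w.im]
  refine ⟨u, Complex.ext ?_ ?_⟩
  · simpa [dotProduct] using hu 0
  · simpa [dotProduct] using hu 1

end Complexification

section Hautus

variable {n m p k τ : Type*} [Fintype n]

def HautusAt (A : Matrix n n ℝ) (B : Matrix n m ℝ) (lam : ℂ) : Prop :=
  ∀ ξ : n → ℂ, ξ ᵥ* A^ℂ = lam • ξ → ξ ᵥ* B^ℂ = 0 → ξ = 0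

lemma rank_fromCols_eq_card_iff_hautusAt [DecidableEq n] [Fintype m] (A : Matrix n n ℝ)
    (B : Matrix n m ℝ) (lam : ℂ) :
    (fromCols (A^ℂ - lam • 1) B^ℂ).rank = Fintype.card n ↔ HautusAt A B lam := by
  rw [rank_eq_card_iff_vecMul_eq_zero]
  refine forall_congr' fun ξ => ?_
  rw [vecMul_fromCols, ← Sum.elim_zero_zero, Sum.elim_eq_iff, vecMul_sub, vecMul_smul, vecMul_one,
    sub_eq_zero, and_imp]

variable [Fintype p] {A₀ : Matrix n n ℝ} {B : Matrix n m ℝ} {C : Matrix p n ℝ}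
  {D : Matrix p m ℝ}

lemma not_hautusAt_of_vecMul_eq {Δ : Matrix n n ℝ} {L : Matrix n p ℝ} {lam : ℂ} {ξ : n → ℂ}
    {η : p → ℂ} (hξ : ξ ≠ 0) (hΔ : ξ ᵥ* Δ^ℂ = lam • ξ - ξ ᵥ* A₀^ℂ - η ᵥ* C^ℂ)
    (hL : ξ ᵥ* L^ℂ = η) (hB : ξ ᵥ* B^ℂ + η ᵥ* D^ℂ = 0) :
    ¬HautusAt (A₀ + Δ + L * C) (B + L * D) lam := by
  intro h
  refine hξ (h ξ ?_ ?_)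
  · rw [Matrix.map_add _ (map_add _), Matrix.map_add _ (map_add _), Matrix.map_mul, vecMul_add,
      vecMul_add, hΔ, ← vecMul_vecMul, hL]
    abel
  · rw [Matrix.map_add _ (map_add _), Matrix.map_mul, vecMul_add, ← vecMul_vecMul, hL, hB]

lemma not_hautusAt_add_realPreimage {ξ : n → ℂ} {u₁ u₂ : n → ℝ} (h₁ : ξ ⬝ᵥ (ofReal ∘ u₁) = 1)
    (h₂ : ξ ⬝ᵥ (ofReal ∘ u₂) = I) {η : p → ℂ} (hB : ξ ᵥ* B^ℂ + η ᵥ* D^ℂ = 0) (lam : ℂ) :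
    ¬HautusAt (A₀ + realPreimage u₁ u₂ (lam • ξ - ξ ᵥ* A₀^ℂ - η ᵥ* C^ℂ) +
      realPreimage u₁ u₂ η * C) (B + realPreimage u₁ u₂ η * D) lam :=
  not_hautusAt_of_vecMul_eq (by rintro rfl; simp at h₁) (vecMul_realPreimage h₁ h₂ _)
    (vecMul_realPreimage h₁ h₂ _) hB

lemma not_hautusAt_add_vecMulVec {ζ u : n → ℝ} (hu : ζ ⬝ᵥ u = 1) {η : p → ℝ}
    (hB : ζ ᵥ* B + η ᵥ* D = 0) (μ : ℝ) :
    ¬HautusAt (A₀ + vecMulVec u (μ • ζ - ζ ᵥ* A₀ - η ᵥ* C) + vecMulVec u η * C)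
      (B + vecMulVec u η * D) μ := by
  refine not_hautusAt_of_vecMul_eq (ξ := ofReal ∘ ζ) (η := ofReal ∘ η) ?_ ?_ ?_ ?_
  · intro h
    have hζ : ζ = 0 := funext fun i => by simpa using congrFun h i
    simp [hζ] at hu
  · rw [ofReal_comp_vecMul, ofReal_comp_vecMul, ofReal_comp_vecMul, vecMul_vecMulVec, hu,
      one_smul]
    ext; simp
  · rw [ofReal_comp_vecMul, vecMul_vecMulVec, hu, one_smul]
  · rw [ofReal_comp_vecMul, ofReal_comp_vecMul]
    ext j
    simpa using congrArg ofReal (congrFun hB j)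

variable {X : Matrix n τ ℝ}

lemma exists_real_relation_of_not_linearIndependent {ξ : n → ℂ} (hξ : ξ ≠ 0)
    (hind : ¬LinearIndependent ℝ ![re ∘ ξ, im ∘ ξ]) {lam : ℂ} {η : p → ℂ}
    (h₁ : (lam • ξ - ξ ᵥ* A₀^ℂ - η ᵥ* C^ℂ) ᵥ* X^ℂ = 0) (h₂ : ξ ᵥ* B^ℂ + η ᵥ* D^ℂ = 0) (μ : ℝ) :
    ∃ ζ : n → ℝ, ζ ≠ 0 ∧ ∃ (μ' : ℝ) (η' : p → ℝ), (μ' = μ ∨ (μ' : ℂ) = lam) ∧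
      (μ' • ζ - ζ ᵥ* A₀ - η' ᵥ* C) ᵥ* X = 0 ∧ ζ ᵥ* B + η' ᵥ* D = 0 := by
  obtain ⟨c, hc, ζ, hcξ⟩ := exists_smul_eq_ofReal_of_not_linearIndependent hind
  have hζ : ζ ≠ 0 := by
    rintro rfl
    refine hξ ((smul_eq_zero.mp ?_).resolve_left hc)
    rw [hcξ]
    ext; simp
  -- `φ lam = μ` if `lam.im ≠ 0`, while for `lam.im = 0` the quotient is `0` and `φ lam = lam.re`.
  set φ : ℂ →ₗ[ℝ] ℝ := reLm + ((μ - lam.re) / lam.im) • imLm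
  have hφ (r : ℝ) : φ r = r := by simp [φ]
  refine ⟨ζ, hζ, φ lam, φ ∘ (c • η), ?_, ?_, ?_⟩
  · by_cases him : lam.im = 0
    · right
      apply Complex.ext <;> simp [φ, him]
    · left
      simp [φ]
      field_simp
      ring
  · have h := congrArg (fun v => φ ∘ (c • v)) h₁
    simp only [← smul_vecMul, smul_sub, smul_comm c lam, hcξ, smul_zero] at h
    have hlin : φ lam • ζ - ζ ᵥ* A₀ - (φ ∘ (c • η)) ᵥ* C =
        φ ∘ (lam • (ofReal ∘ ζ) - (ofReal ∘ ζ) ᵥ* A₀^ℂ - (c • η) ᵥ* C^ℂ) := by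
      ext i
      have e := congrFun (comp_vecMul_map φ (c • η) C) i
      simp only [Function.comp_apply] at e
      simp only [Pi.sub_apply, Pi.smul_apply, Function.comp_apply, map_sub, ofReal_comp_vecMul,
        hφ, e, smul_eq_mul, mul_comm lam, ← Complex.real_smul, map_smul]
      ring
    rw [hlin, ← comp_vecMul_map]
    ext t
    simpa using congrFun h t
  · have h := congrArg (fun v => φ ∘ (c • v)) h₂
    simp only [← smul_vecMul, smul_add, hcξ, smul_zero, ofReal_comp_vecMul] at h
    rw [← comp_vecMul_map]
    ext j
    simpa [hφ] using congrFun h j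

variable [Fintype k] {M : Matrix k n ℝ}

variable (A₀ B C D X M) in
def LeftKernelCondition (lam : ℂ) : Prop :=
  ∀ (g : k → ℂ) (η : p → ℂ),
    (lam • (g ᵥ* M^ℂ) - g ᵥ* M^ℂ ᵥ* A₀^ℂ - η ᵥ* C^ℂ) ᵥ* X^ℂ = 0 →
    g ᵥ* M^ℂ ᵥ* B^ℂ + η ᵥ* D^ℂ = 0 → g ᵥ* M^ℂ = 0

lemma leftKernelCondition_of_forall_hautusAt {lam : ℂ} {μ : ℝ}
    (hlam : ∀ A, M * A * X = M * A₀ * X → ∀ L : Matrix n p ℝ,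
      HautusAt (A + L * C) (B + L * D) lam)
    (hμ : ∀ A, M * A * X = M * A₀ * X → ∀ L : Matrix n p ℝ,
      HautusAt (A + L * C) (B + L * D) μ) :
    LeftKernelCondition A₀ B C D X M lam := by
  intro g η h₁ h₂
  by_contra hξ
  by_cases hind : LinearIndependent ℝ ![re ∘ (g ᵥ* M^ℂ), im ∘ (g ᵥ* M^ℂ)]
  · obtain ⟨u₁, hu₁⟩ := exists_dotProduct_ofReal_eq hind 1
    obtain ⟨u₂, hu₂⟩ := exists_dotProduct_ofReal_eq hind I
    refine not_hautusAt_add_realPreimage (A₀ := A₀) (C := C) hu₁ hu₂ h₂ lam (hlam _ ?_ _)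
    rw [Matrix.mul_add, Matrix.add_mul, Matrix.mul_assoc M (realPreimage _ _ _),
      realPreimage_mul, h₁, realPreimage_zero, Matrix.mul_zero, add_zero]
  · obtain ⟨ζ, hζ, μ', η', hμ', e₁, e₂⟩ :=
      exists_real_relation_of_not_linearIndependent hξ hind h₁ h₂ μ
    have hu : ζ ⬝ᵥ (ζ ⬝ᵥ ζ)⁻¹ • ζ = 1 := by
      rw [dotProduct_smul, smul_eq_mul, inv_mul_cancel₀ (dotProduct_self_eq_zero.not.mpr hζ)]
    refine not_hautusAt_add_vecMulVec (A₀ := A₀) (C := C) hu e₂ μ' ?_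
    have hmem : M * (A₀ + vecMulVec ((ζ ⬝ᵥ ζ)⁻¹ • ζ) (μ' • ζ - ζ ᵥ* A₀ - η' ᵥ* C)) * X =
        M * A₀ * X := by
      rw [Matrix.mul_add, Matrix.add_mul, Matrix.mul_assoc M (vecMulVec _ _), vecMulVec_mul, e₁,
        add_eq_left]
      ext; simp [mul_apply, vecMulVec]
    rcases hμ' with rfl | h
    · exact hμ _ hmem _
    · exact h ▸ hlam _ hmem _

variable [Fintype m]

lemma exists_vecMul_map_eq_of_ker_le
    (hker : ker M.mulVecLin ≤ (ker D.mulVecLin).map B.mulVecLin) {ξ : n → ℂ} {η : p → ℂ}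
    (h : ξ ᵥ* B^ℂ + η ᵥ* D^ℂ = 0) : ∃ g : k → ℂ, g ᵥ* M^ℂ = ξ := by
  rw [ker_mulVecLin_le_map_ker_iff] at hker
  have hpart (φ : ℂ →ₗ[ℝ] ℝ) : ∃ g, g ᵥ* M = φ ∘ ξ := by
    refine hker _ (φ ∘ η) ?_
    rw [← comp_vecMul_map, ← comp_vecMul_map]
    ext j
    simpa using congrArg φ (congrFun h j)
  obtain ⟨g₁, hg₁⟩ := hpart reLm
  obtain ⟨g₂, hg₂⟩ := hpart imLm
  refine ⟨fun i => ⟨g₁ i, g₂ i⟩, funext fun j => Complex.ext ?_ ?_⟩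
  · exact (congrFun (comp_vecMul_map reLm _ M) j).trans (congrFun hg₁ j)
  · exact (congrFun (comp_vecMul_map imLm _ M) j).trans (congrFun hg₂ j)

lemma rank_fromBlocks_eq_iff_leftKernelCondition [Fintype τ] (lam : ℂ) :
    (fromBlocks ((M * A₀ * X)^ℂ - lam • (M^ℂ * X^ℂ)) (M^ℂ * B^ℂ) (C^ℂ * X^ℂ) D^ℂ).rank =
      M.rank + (fromCols (C * X) D).rank ↔ LeftKernelCondition A₀ B C D X M lam := by
  have hblock : fromBlocks ((M * A₀ * X)^ℂ - lam • (M^ℂ * X^ℂ)) (M^ℂ * B^ℂ) (C^ℂ * X^ℂ) D^ℂ =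
      fromRows (M^ℂ * fromCols (A₀^ℂ * X^ℂ - lam • X^ℂ) B^ℂ) (fromCols (C * X) D)^ℂ := by
    rw [mul_fromCols, fromCols_map, Matrix.map_mul, Matrix.map_mul, Matrix.map_mul,
      Matrix.mul_sub, Matrix.mul_smul, Matrix.mul_assoc, fromRows_fromCols_eq_fromBlocks]
  rw [hblock, ← rank_map_algebraMap_s10 (L := ℂ) M,
    ← rank_map_algebraMap_s10 (L := ℂ) (fromCols (C * X) D), rank_fromRows_mul_eq_add_iff]
  refine forall_congr' fun g => ?_
  set ξ := g ᵥ* M^ℂ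
  have hsplit (η : p → ℂ) : ξ ᵥ* fromCols (A₀^ℂ * X^ℂ - lam • X^ℂ) B^ℂ +
      η ᵥ* (fromCols (C * X) D)^ℂ = 0 ↔
      (lam • ξ - ξ ᵥ* A₀^ℂ - η ᵥ* C^ℂ) ᵥ* X^ℂ = 0 ∧ ξ ᵥ* B^ℂ + η ᵥ* D^ℂ = 0 := by
    have hneg : (lam • ξ - ξ ᵥ* A₀^ℂ - η ᵥ* C^ℂ) ᵥ* X^ℂ =
        -(ξ ᵥ* (A₀^ℂ * X^ℂ - lam • X^ℂ) + η ᵥ* (C * X)^ℂ) := by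
      rw [sub_vecMul, sub_vecMul, smul_vecMul, vecMul_sub, vecMul_smul, vecMul_vecMul ξ,
        vecMul_vecMul η, Matrix.map_mul]
      abel
    rw [hneg, neg_eq_zero, fromCols_map, vecMul_fromCols, vecMul_fromCols, ← Sum.elim_add_add,
      ← Sum.elim_zero_zero, Sum.elim_eq_iff]
  simp only [hsplit, and_imp]

lemma hautusAt_of_leftKernelCondition
    (hker : ker M.mulVecLin ≤ (ker D.mulVecLin).map B.mulVecLin) {lam : ℂ}
    (hlam : LeftKernelCondition A₀ B C D X M lam) {A : Matrix n n ℝ}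
    (hA : M * A * X = M * A₀ * X) (L : Matrix n p ℝ) : HautusAt (A + L * C) (B + L * D) lam := by
  intro ξ h₁ h₂
  rw [Matrix.map_add _ (map_add _), Matrix.map_mul, vecMul_add, ← vecMul_vecMul] at h₁ h₂
  obtain ⟨g, rfl⟩ := exists_vecMul_map_eq_of_ker_le hker h₂
  refine hlam g _ ?_ h₂
  have hA' : g ᵥ* M^ℂ ᵥ* A₀^ℂ ᵥ* X^ℂ = g ᵥ* M^ℂ ᵥ* A^ℂ ᵥ* X^ℂ := by
    simp only [vecMul_vecMul, ← Matrix.map_mul, hA]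
  rw [sub_vecMul, sub_vecMul, hA', ← sub_vecMul, ← sub_vecMul, ← h₁, add_sub_cancel_left,
    sub_self, zero_vecMul]

lemma ker_le_of_forall_hautusAt (μ : ℝ)
    (h : ∀ A, M * A * X = M * A₀ * X → ∀ L : Matrix n p ℝ, HautusAt (A + L * C) (B + L * D) μ) :
    ker M.mulVecLin ≤ (ker D.mulVecLin).map B.mulVecLin := by
  rw [ker_mulVecLin_le_map_ker_iff]
  intro ζ η hζη
  by_contra hζ
  obtain ⟨v, hv, hζv⟩ : ∃ v, M *ᵥ v = 0 ∧ ζ ⬝ᵥ v ≠ 0 := by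
    by_contra! H
    exact hζ (M.exists_vecMul_eq_of_forall_mulVec_eq_zero ζ H)
  have hu : ζ ⬝ᵥ (ζ ⬝ᵥ v)⁻¹ • v = 1 := by rw [dotProduct_smul, smul_eq_mul, inv_mul_cancel₀ hζv]
  refine not_hautusAt_add_vecMulVec (A₀ := A₀) hu hζη μ (h _ ?_ _)
  rw [Matrix.mul_add, mul_vecMulVec, mulVec_smul, hv, smul_zero, zero_vecMulVec, add_zero]

theorem forall_hautusAt_iff [Fintype τ] {S : Set ℂ} (hS : ∃ μ : ℝ, (μ : ℂ) ∈ S) :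
    (∀ A, M * A * X = M * A₀ * X → ∀ L : Matrix n p ℝ, ∀ lam ∈ S,
        HautusAt (A + L * C) (B + L * D) lam) ↔
      ker M.mulVecLin ≤ (ker D.mulVecLin).map B.mulVecLin ∧
        ∀ lam ∈ S, (fromBlocks ((M * A₀ * X)^ℂ - lam • (M^ℂ * X^ℂ)) (M^ℂ * B^ℂ) (C^ℂ * X^ℂ)
          D^ℂ).rank = M.rank + (fromCols (C * X) D).rank := by
  obtain ⟨μ, hμ⟩ := hS
  simp only [rank_fromBlocks_eq_iff_leftKernelCondition]
  refine ⟨fun h => ⟨ker_le_of_forall_hautusAt μ fun A hA L => h A hA L μ hμ,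
      fun lam hlam => leftKernelCondition_of_forall_hautusAt (fun A hA L => h A hA L lam hlam)
        fun A hA L => h A hA L μ hμ⟩, ?_⟩
  rintro ⟨hker, hlk⟩ A hA L lam hlam
  exact hautusAt_of_leftKernelCondition hker (hlk lam hlam) hA L

end Hautus

lemma mem_Adat_iff {n m p q T k : ℕ} {B : Matrix (Fin n) (Fin m) ℝ}
    {C : Matrix (Fin p) (Fin n) ℝ} {D : Matrix (Fin p) (Fin m) ℝ} {E : Matrix (Fin n) (Fin q) ℝ}
    {F : Matrix (Fin p) (Fin q) ℝ} {U : Matrix (Fin m) (Fin T) ℝ}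
    {X : Matrix (Fin n) (Fin (T + 1)) ℝ} {Y : Matrix (Fin p) (Fin T) ℝ}
    {M : Matrix (Fin k) (Fin n) ℝ} {N : Matrix (Fin k) (Fin p) ℝ} {R : Matrix (Fin k) (Fin T) ℝ}
    (hMN : ker (fromCols M N).mulVecLin = range (fromRows E F).mulVecLin)
    (hR : R = M * (Xplus X - B * U) + N * (Y - C * Xminus X - D * U))
    (A : Matrix (Fin n) (Fin n) ℝ) :
    A ∈ Adat B C D E F U X Y ↔ M * A * Xminus X = R := by
  have hnoise : A ∈ Adat B C D E F U X Y ↔ ∃ W : Matrix (Fin q) (Fin T) ℝ,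
      fromRows E F * W = fromRows (Xplus X - A * Xminus X - B * U) (Y - C * Xminus X - D * U) := by
    refine exists_congr fun W => ?_
    rw [fromRows_mul, fromRows_ext_iff]
    exact and_congr ⟨fun h => by rw [h]; abel, fun h => by rw [h]; abel⟩
      ⟨fun h => by rw [h]; abel, fun h => by rw [h]; abel⟩
  have hres : M * (Xplus X - A * Xminus X - B * U) + N * (Y - C * Xminus X - D * U) =
      R - M * A * Xminus X := by
    rw [hR, sub_right_comm, Matrix.mul_sub M (Xplus X - B * U), Matrix.mul_assoc M A]
    abel
  rw [hnoise, exists_mul_eq_iff_mul_eq_zero hMN, fromCols_mul_fromRows, hres, sub_eq_zero, eq_comm]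

theorem informative_strong_controllability_stabilizability_general (n m p q T k : ℕ)
    (B : Matrix (Fin n) (Fin m) ℝ) (C : Matrix (Fin p) (Fin n) ℝ)
    (D : Matrix (Fin p) (Fin m) ℝ) (E : Matrix (Fin n) (Fin q) ℝ)
    (F : Matrix (Fin p) (Fin q) ℝ)
    (U : Matrix (Fin m) (Fin T) ℝ) (X : Matrix (Fin n) (Fin (T + 1)) ℝ)
    (Y : Matrix (Fin p) (Fin T) ℝ)
    (M : Matrix (Fin k) (Fin n) ℝ) (N : Matrix (Fin k) (Fin p) ℝ)
    (hAdat : (Adat B C D E F U X Y).Nonempty)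
    (hMN : LinearMap.ker (fromCols M N).mulVecLin
      = LinearMap.range (fromRows E F).mulVecLin)
    (R : Matrix (Fin k) (Fin T) ℝ)
    (hR : R = M * (Xplus X - B * U) + N * (Y - C * Xminus X - D * U)) :
    ((∀ A ∈ Adat B C D E F U X Y, ∀ L : Matrix (Fin n) (Fin p) ℝ, ∀ lam : ℂ,
        (fromCols (cx (A + L * C) - lam • 1) (cx (B + L * D))).rank = n) ↔
      (LinearMap.ker M.mulVecLin
          ≤ Submodule.map B.mulVecLin (LinearMap.ker D.mulVecLin) ∧
        ∀ lam : ℂ,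
          (fromBlocks (cx R - lam • (cx M * cx (Xminus X))) (cx M * cx B)
              (cx C * cx (Xminus X)) (cx D)).rank
            = M.rank + (fromCols (C * Xminus X) D).rank))
    ∧
    ((∀ A ∈ Adat B C D E F U X Y, ∀ L : Matrix (Fin n) (Fin p) ℝ, ∀ lam : ℂ,
        1 ≤ ‖lam‖ →
        (fromCols (cx (A + L * C) - lam • 1) (cx (B + L * D))).rank = n) ↔
      (LinearMap.ker M.mulVecLin
          ≤ Submodule.map B.mulVecLin (LinearMap.ker D.mulVecLin) ∧
        ∀ lam : ℂ, 1 ≤ ‖lam‖ →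
          (fromBlocks (cx R - lam • (cx M * cx (Xminus X))) (cx M * cx B)
              (cx C * cx (Xminus X)) (cx D)).rank
            = M.rank + (fromCols (C * Xminus X) D).rank)) := by
  obtain ⟨A₀, hA₀⟩ := hAdat
  have hmem := mem_Adat_iff hMN hR
  obtain rfl := (hmem A₀).1 hA₀
  have hrank (A : Matrix (Fin n) (Fin n) ℝ) (B' : Matrix (Fin n) (Fin m) ℝ) (lam : ℂ) :
      (fromCols (cx A - lam • 1) (cx B')).rank = n ↔ HautusAt A B' lam := by
    rw [← rank_fromCols_eq_card_iff_hautusAt, Fintype.card_fin]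
    rfl
  simp only [hmem, hrank]
  constructor
  · have h := forall_hautusAt_iff (A₀ := A₀) (B := B) (C := C) (D := D) (M := M) (X := Xminus X)
      (S := Set.univ) ⟨0, trivial⟩
    simp only [Set.mem_univ, forall_const] at h
    exact h
  · exact forall_hautusAt_iff (S := {z | 1 ≤ ‖z‖}) ⟨1, by simp⟩

/-- informativity of the data for strong controllability /
strong stabilizability. -/
theorem informative_strong_controllability_stabilizability (n m p q T k : ℕ)
    (hn : 1 ≤ n) (hm : 1 ≤ m) (hp : 1 ≤ p) (hq : 1 ≤ q) (hT : 1 ≤ T)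
    (B : Matrix (Fin n) (Fin m) ℝ) (C : Matrix (Fin p) (Fin n) ℝ)
    (D : Matrix (Fin p) (Fin m) ℝ) (E : Matrix (Fin n) (Fin q) ℝ)
    (F : Matrix (Fin p) (Fin q) ℝ)
    (U : Matrix (Fin m) (Fin T) ℝ) (X : Matrix (Fin n) (Fin (T + 1)) ℝ)
    (Y : Matrix (Fin p) (Fin T) ℝ)
    (M : Matrix (Fin k) (Fin n) ℝ) (N : Matrix (Fin k) (Fin p) ℝ)
    (hAdat : (Adat B C D E F U X Y).Nonempty)
    (hMN : LinearMap.ker (fromCols M N).mulVecLin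
      = LinearMap.range (fromRows E F).mulVecLin)
    (R : Matrix (Fin k) (Fin T) ℝ)
    (hR : R = M * (Xplus X - B * U) + N * (Y - C * Xminus X - D * U)) :
    ((∀ A ∈ Adat B C D E F U X Y, ∀ L : Matrix (Fin n) (Fin p) ℝ, ∀ lam : ℂ,
        (fromCols (cx (A + L * C) - lam • 1) (cx (B + L * D))).rank = n) ↔
      (LinearMap.ker M.mulVecLin
          ≤ Submodule.map B.mulVecLin (LinearMap.ker D.mulVecLin) ∧
        ∀ lam : ℂ,
          (fromBlocks (cx R - lam • (cx M * cx (Xminus X))) (cx M * cx B)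
              (cx C * cx (Xminus X)) (cx D)).rank
            = M.rank + (fromCols (C * Xminus X) D).rank))
    ∧
    ((∀ A ∈ Adat B C D E F U X Y, ∀ L : Matrix (Fin n) (Fin p) ℝ, ∀ lam : ℂ,
        1 ≤ ‖lam‖ →
        (fromCols (cx (A + L * C) - lam • 1) (cx (B + L * D))).rank = n) ↔
      (LinearMap.ker M.mulVecLin
          ≤ Submodule.map B.mulVecLin (LinearMap.ker D.mulVecLin) ∧
        ∀ lam : ℂ, 1 ≤ ‖lam‖ →
          (fromBlocks (cx R - lam • (cx M * cx (Xminus X))) (cx M * cx B)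
              (cx C * cx (Xminus X)) (cx D)).rank
            = M.rank + (fromCols (C * Xminus X) D).rank)) :=
  informative_strong_controllability_stabilizability_general n m p q T k B C D E F U X Y M N hAdat
    hMN R hR
end
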